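/- arXiv:2306.13596 — 5 statements merged into one kernel-verified Lean document; each statement's English description precedes it below -/
import Mathlib

section
/- Let T ≥ 2 be an integer, let s ∈ ℝ^T be a probability vector (s_t ≥ 0 for all t and Σ_{t=1}^T s_t = 1), and let ā, γ ∈ ℝ^T be vectors such that γ_t = γ̄ for a common value γ̄ for every t ≥ 2. Suppose additionally that γ₁ − γ̄ ≥ 0 and that there is a_gap ≥ 0 with ā₁ − ā_t ≥ a_gap for all t ≥ 2. Then Σ_{t=1}^T ā_t γ_t s_t − (Σ_{t=1}^T ā_t s_t)(Σ_{t=1}^T γ_t s_t) ≥ (γ₁ − γ̄) · a_gap · s₁(1 − s₁). -/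
/-- **Softmax-gradient correlation lower bound.**
For a probability vector `s` and vectors `ā, γ ∈ ℝ^T` with `γ` constant (equal to `γ̄`)
over coordinates `t ≥ 2` (i.e. `t ≠ 0` in zero-based indexing), with `γ₁ − γ̄ ≥ 0` and
`ā₁ − ā_t ≥ a_gap ≥ 0` for all `t ≥ 2`:
`ā⊤diag(s)γ − (ā⊤s)(s⊤γ) ≥ (γ₁ − γ̄)·a_gap·s₁(1 − s₁)`. -/
theorem softmax_correlation_lower_bound (T : ℕ) [NeZero T] (hT : 2 ≤ T)
    (s abar γ : Fin T → ℝ) (γbar agap : ℝ)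
    (hs_nonneg : ∀ t, 0 ≤ s t) (hs_sum : ∑ t, s t = 1)
    (hγ : ∀ t, t ≠ 0 → γ t = γbar)
    (hγgap : 0 ≤ γ 0 - γbar)
    (hagap : 0 ≤ agap)
    (ha : ∀ t, t ≠ 0 → agap ≤ abar 0 - abar t) :
    (γ 0 - γbar) * agap * (s 0 * (1 - s 0))
      ≤ ∑ t, abar t * γ t * s t - (∑ t, abar t * s t) * (∑ t, γ t * s t) := by
  classical
  set D := (Finset.univ : Finset (Fin T)) \ {0} with hD
  have hmem : ∀ t ∈ D, t ≠ 0 := by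
    intro t ht
    simpa [hD] using (Finset.mem_sdiff.mp ht).2
  have hsplit : ∀ f : Fin T → ℝ, ∑ t, f t = f 0 + ∑ t ∈ D, f t := by
    intro f
    rw [hD, Finset.sum_eq_sum_sdiff_singleton_add (Finset.mem_univ (0 : Fin T)) f]
    ring
  set S' := ∑ t ∈ D, s t with hS'
  set B := ∑ t ∈ D, abar t * s t with hB
  have h0 : s 0 + S' = 1 := by rw [← hsplit s] at *; exact hs_sum
  have h1 : ∑ t, γ t * s t = γ 0 * s 0 + γbar * S' := by
    rw [hsplit (fun t => γ t * s t), hS', Finset.mul_sum]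
    congr 1
    exact Finset.sum_congr rfl fun t ht => by rw [hγ t (hmem t ht)]
  have h2 : ∑ t, abar t * γ t * s t = abar 0 * γ 0 * s 0 + γbar * B := by
    rw [hsplit (fun t => abar t * γ t * s t), hB, Finset.mul_sum]
    congr 1
    exact Finset.sum_congr rfl fun t ht => by rw [hγ t (hmem t ht)]; ring
  have h3 : ∑ t, abar t * s t = abar 0 * s 0 + B := hsplit _
  have hineq : agap * S' ≤ abar 0 * S' - B := by
    have : ∑ t ∈ D, agap * s t ≤ ∑ t ∈ D, (abar 0 - abar t) * s t :=
      Finset.sum_le_sum fun t ht =>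
        mul_le_mul_of_nonneg_right (ha t (hmem t ht)) (hs_nonneg t)
    calc agap * S' = ∑ t ∈ D, agap * s t := by rw [hS', Finset.mul_sum]
      _ ≤ ∑ t ∈ D, (abar 0 - abar t) * s t := this
      _ = abar 0 * S' - B := by
          rw [hS', hB, Finset.mul_sum, ← Finset.sum_sub_distrib]
          exact Finset.sum_congr rfl fun t _ => by ring
  have hcs : 0 ≤ (γ 0 - γbar) * s 0 := mul_nonneg hγgap (hs_nonneg 0)
  have key := mul_le_mul_of_nonneg_left hineq hcs
  have hS'eq : S' = 1 - s 0 := by linarith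
  rw [hS'eq] at key
  rw [h1, h2, h3, hS'eq]
  nlinarith [key]
end

section
/- Suppose ℓ is differentiable and strictly decreasing (so ℓ' < 0 everywhere), the SVM constraints defining p^{mm⋆} are feasible, and for every sample i the scores of all non-optimal tokens are equal, i.e. γ_{it₁} = γ_{it₂} for all t₁, t₂ ≠ optᵢ, while γ_{i,optᵢ} > γ_{it} for all t ≠ optᵢ. For p ∈ ℝ^d define ℓ'ᵢ = ℓ'(γᵢ⊤𝕊(Kᵢp)), p_{opt,i} = 𝕊(Kᵢp)_{optᵢ}, lgt'ᵢ = p_{opt,i}(1 − p_{opt,i}), a_gapⁱ = inf_{t≠optᵢ} (k_{i,optᵢ} − k_{it})⊤p^{mm⋆}, and γ_gapⁱ = inf_{t≠optᵢ} (γ_{i,optᵢ} − γ_{it}). Then for every p ∈ ℝ^d: −⟨∇ℒ(p), p^{mm⋆}⟩ ≥ min_{i∈[n]} { −ℓ'ᵢ · lgt'ᵢ · a_gapⁱ · γ_gapⁱ } > 0. -/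
open scoped RealInnerProductSpace

/-- Identify a plain function `Fin d → ℝ` with a point of Euclidean space. -/
noncomputable def toEuc {d : ℕ} (f : Fin d → ℝ) : EuclideanSpace ℝ (Fin d) := WithLp.toLp 2 f

/-- The softmax map `𝕊(a)_t = e^{a_t} / Σ_τ e^{a_τ}`. -/
noncomputable def softmax {T : ℕ} (a : Fin T → ℝ) : Fin T → ℝ :=
  fun t => Real.exp (a t) / ∑ τ, Real.exp (a τ)

/-- Token scores `γᵢ = Yᵢ · Xᵢ v`, entrywise `γ_{it} = Yᵢ · x_{it}⊤v`. -/
noncomputable def score {n d T : ℕ} (X : Fin n → Matrix (Fin T) (Fin d) ℝ)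
    (Y : Fin n → ℝ) (v : Fin d → ℝ) (i : Fin n) (t : Fin T) : ℝ :=
  Y i * ∑ j, X i t j * v j

/-- Key rows `k_{it} = W⊤ x_{it}`, i.e. the rows of `Kᵢ = Xᵢ W`. -/
noncomputable def key {n d T : ℕ} (X : Fin n → Matrix (Fin T) (Fin d) ℝ)
    (W : Matrix (Fin d) (Fin d) ℝ) (i : Fin n) (t : Fin T) (j : Fin d) : ℝ :=
  (X i * W) t j

/-- Softmax attention probabilities `𝕊(Kᵢ p)`. -/
noncomputable def sprob {n d T : ℕ} (X : Fin n → Matrix (Fin T) (Fin d) ℝ)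
    (W : Matrix (Fin d) (Fin d) ℝ) (i : Fin n) (p : EuclideanSpace ℝ (Fin d)) :
    Fin T → ℝ :=
  softmax (fun t => ∑ j, key X W i t j * p j)

/-- The training objective `ℒ(p) = (1/n) Σᵢ ℓ(γᵢ⊤ 𝕊(Kᵢ p))`. -/
noncomputable def tLoss {n d T : ℕ} (ℓ : ℝ → ℝ)
    (X : Fin n → Matrix (Fin T) (Fin d) ℝ) (Y : Fin n → ℝ) (v : Fin d → ℝ)
    (W : Matrix (Fin d) (Fin d) ℝ) (p : EuclideanSpace ℝ (Fin d)) : ℝ :=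
  (n : ℝ)⁻¹ * ∑ i, ℓ (∑ t, score X Y v i t * sprob X W i p t)

theorem univ_nonempty_of_pos {n : ℕ} (hn : 0 < n) :
    (Finset.univ : Finset (Fin n)).Nonempty := ⟨⟨0, hn⟩, Finset.mem_univ _⟩

theorem erase_nonempty_of_two_le {T : ℕ} (hT : 2 ≤ T) (t0 : Fin T) :
    (Finset.univ.erase t0).Nonempty := by
  rw [← Finset.card_pos, Finset.card_erase_of_mem (Finset.mem_univ _), Finset.card_univ,
    Fintype.card_fin]
  omega

noncomputable def lfun {d : ℕ} (c : Fin d → ℝ) : EuclideanSpace ℝ (Fin d) →L[ℝ] ℝ :=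
  LinearMap.toContinuousLinearMap
    { toFun := fun p => ∑ j, c j * p j
      map_add' := by
        intro x y
        simp [mul_add, Finset.sum_add_distrib]
      map_smul' := by
        intro r x
        simp [Finset.mul_sum, mul_comm, mul_left_comm] }

@[simp] lemma lfun_apply {d : ℕ} (c : Fin d → ℝ) (p : EuclideanSpace ℝ (Fin d)) :
    lfun c p = ∑ j, c j * p j := rfl

lemma hasFDerivAt_lfun {d : ℕ} (c : Fin d → ℝ) (p : EuclideanSpace ℝ (Fin d)) :
    HasFDerivAt (fun p : EuclideanSpace ℝ (Fin d) => ∑ j, c j * p j) (lfun c) p :=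
  (lfun c).hasFDerivAt

lemma sample_deriv {d T : ℕ} (hT : 0 < T) (ℓ : ℝ → ℝ) (hdiff : Differentiable ℝ ℓ)
    (γ : Fin T → ℝ) (k : Fin T → Fin d → ℝ) (p q : EuclideanSpace ℝ (Fin d)) :
    ∃ L : EuclideanSpace ℝ (Fin d) →L[ℝ] ℝ,
      HasFDerivAt (fun x : EuclideanSpace ℝ (Fin d) =>
          ℓ (∑ t, γ t * softmax (fun t => ∑ j, k t j * x j) t)) L p ∧
      L q = deriv ℓ (∑ t, γ t * softmax (fun t => ∑ j, k t j * p j) t) *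
        ((∑ t, γ t * softmax (fun t => ∑ j, k t j * p j) t * (∑ j, k t j * q j)) -
         (∑ t, γ t * softmax (fun t => ∑ j, k t j * p j) t) *
         (∑ t, softmax (fun t => ∑ j, k t j * p j) t * (∑ j, k t j * q j))) := by
  haveI : NeZero T := ⟨hT.ne'⟩
  set a : EuclideanSpace ℝ (Fin d) → Fin T → ℝ := fun x t => ∑ j, k t j * x j with ha
  set N : EuclideanSpace ℝ (Fin d) → ℝ := fun x => ∑ t, γ t * Real.exp (a x t) with hN
  set Z : EuclideanSpace ℝ (Fin d) → ℝ := fun x => ∑ t, Real.exp (a x t) with hZ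
  have hZpos : ∀ x, 0 < Z x := fun x =>
    Finset.sum_pos (fun t _ => Real.exp_pos _) ⟨⟨0, hT⟩, Finset.mem_univ _⟩
  have hZne : Z p ≠ 0 := (hZpos p).ne'
  have hfun : ∀ x : EuclideanSpace ℝ (Fin d),
      (∑ t, γ t * softmax (fun t => ∑ j, k t j * x j) t) = N x * (Z x)⁻¹ := by
    intro x
    rw [hN]
    simp only [Finset.sum_mul]
    refine Finset.sum_congr rfl fun t _ => ?_
    rw [softmax, div_eq_mul_inv, mul_assoc]
  have hZ' : HasFDerivAt Z (∑ t, Real.exp (a p t) • lfun (k t)) p :=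
    HasFDerivAt.fun_sum fun t _ => (hasFDerivAt_lfun (k t) p).exp
  have hN' : HasFDerivAt N (∑ t, γ t • (Real.exp (a p t) • lfun (k t))) p :=
    HasFDerivAt.fun_sum fun t _ => ((hasFDerivAt_lfun (k t) p).exp).const_mul (γ t)
  have hinv : HasFDerivAt (fun x => (Z x)⁻¹)
      ((-(Z p ^ 2)⁻¹) • ∑ t, Real.exp (a p t) • lfun (k t)) p :=
    (hasDerivAt_inv hZne).comp_hasFDerivAt p hZ'
  have hg : HasFDerivAt (fun x => N x * (Z x)⁻¹)
      (N p • ((-(Z p ^ 2)⁻¹) • ∑ t, Real.exp (a p t) • lfun (k t)) +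
        (Z p)⁻¹ • ∑ t, γ t • (Real.exp (a p t) • lfun (k t))) p := hN'.mul hinv
  have hl : HasDerivAt ℓ (deriv ℓ (N p * (Z p)⁻¹)) (N p * (Z p)⁻¹) :=
    (hdiff (N p * (Z p)⁻¹)).hasDerivAt
  have hfinal := hl.comp_hasFDerivAt p hg
  refine ⟨deriv ℓ (N p * (Z p)⁻¹) •
      (N p • (-(Z p ^ 2)⁻¹) • (∑ t, Real.exp (a p t) • lfun (k t)) +
        (Z p)⁻¹ • ∑ t, γ t • (Real.exp (a p t) • lfun (k t))), ?_, ?_⟩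
  · have heq : (fun x : EuclideanSpace ℝ (Fin d) =>
        ℓ (∑ t, γ t * softmax (fun t => ∑ j, k t j * x j) t)) =
        (ℓ ∘ fun x => N x * (Z x)⁻¹) := by
      funext x; simp [Function.comp, hfun x]
    rw [heq]; exact hfinal
  · simp only [ContinuousLinearMap.coe_smul', Pi.smul_apply,
      ContinuousLinearMap.add_apply, ContinuousLinearMap.smul_apply,
      ContinuousLinearMap.coe_sum', Finset.sum_apply, lfun_apply, smul_eq_mul,
      hfun p, softmax]
    have e1 : ∀ t : Fin T, γ t * (Real.exp (a p t) / Z p) * (∑ j, k t j * q j)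
        = (γ t * (Real.exp (a p t) * (∑ j, k t j * q j))) / Z p := by
      intro t; field_simp
    have e2 : ∀ t : Fin T, γ t * (Real.exp (a p t) / Z p)
        = (γ t * Real.exp (a p t)) / Z p := by intro t; ring
    have e3 : ∀ t : Fin T, (Real.exp (a p t) / Z p) * (∑ j, k t j * q j)
        = (Real.exp (a p t) * (∑ j, k t j * q j)) / Z p := by intro t; ring
    rw [Finset.sum_congr rfl fun t _ => e1 t, Finset.sum_congr rfl fun t _ => e2 t,
      Finset.sum_congr rfl fun t _ => e3 t, ← Finset.sum_div, ← Finset.sum_div,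
      ← Finset.sum_div]
    have hNp : (∑ i : Fin T, γ i * Real.exp (a p i)) = N p := rfl
    rw [hNp]
    simp only [div_eq_mul_inv, pow_two, mul_inv]
    ring

lemma cov_bound {T : ℕ} (hT : 2 ≤ T) (s γ b : Fin T → ℝ) (t0 : Fin T)
    (hs : ∀ t, 0 < s t) (hsum : ∑ t, s t = 1)
    (hsame : ∀ t₁ t₂, t₁ ≠ t0 → t₂ ≠ t0 → γ t₁ = γ t₂)
    (hopt : ∀ t, t ≠ t0 → γ t < γ t0) :
    s t0 * (1 - s t0) *
      ((Finset.univ.erase t0).inf' (erase_nonempty_of_two_le hT t0) fun t => b t0 - b t) *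
      ((Finset.univ.erase t0).inf' (erase_nonempty_of_two_le hT t0) fun t => γ t0 - γ t)
    ≤ (∑ t, γ t * s t * b t) - (∑ t, γ t * s t) * (∑ t, s t * b t) := by
  set A := (Finset.univ.erase t0).inf' (erase_nonempty_of_two_le hT t0) fun t => b t0 - b t
    with hAdef
  set G := (Finset.univ.erase t0).inf' (erase_nonempty_of_two_le hT t0) fun t => γ t0 - γ t
    with hGdef
  obtain ⟨tw, htw, hGw⟩ := Finset.exists_mem_eq_inf' (erase_nonempty_of_two_le hT t0)
    (fun t => γ t0 - γ t)
  have htw' : tw ≠ t0 := Finset.ne_of_mem_erase htw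
  have hγ : ∀ t, t ≠ t0 → γ t = γ t0 - G := by
    intro t ht
    have := hsame t tw ht htw'
    rw [hGdef, hGw]; linarith
  have hG0 : 0 < G := by
    rw [hGdef, hGw]
    have := hopt tw htw'
    linarith
  have h4 : ∑ t ∈ Finset.univ.erase t0, s t = 1 - s t0 := by
    rw [← hsum, ← Finset.add_sum_erase _ s (Finset.mem_univ t0)]; ring
  have h1 : ∑ t, γ t * s t * b t
      = γ t0 * s t0 * b t0 + (γ t0 - G) * ∑ t ∈ Finset.univ.erase t0, s t * b t := by
    have e : ∑ t ∈ Finset.univ.erase t0, γ t * s t * b t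
        = ∑ t ∈ Finset.univ.erase t0, (γ t0 - G) * (s t * b t) :=
      Finset.sum_congr rfl fun t ht => by rw [hγ t (Finset.ne_of_mem_erase ht)]; ring
    rw [← Finset.add_sum_erase _ _ (Finset.mem_univ t0), e, ← Finset.mul_sum]
  have h2 : ∑ t, γ t * s t = γ t0 * s t0 + (γ t0 - G) * (1 - s t0) := by
    have e : ∑ t ∈ Finset.univ.erase t0, γ t * s t
        = ∑ t ∈ Finset.univ.erase t0, (γ t0 - G) * s t :=
      Finset.sum_congr rfl fun t ht => by rw [hγ t (Finset.ne_of_mem_erase ht)]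
    rw [← Finset.add_sum_erase _ _ (Finset.mem_univ t0), e, ← Finset.mul_sum, h4]
  have h3 : ∑ t, s t * b t = s t0 * b t0 + ∑ t ∈ Finset.univ.erase t0, s t * b t :=
    (Finset.add_sum_erase _ _ (Finset.mem_univ t0)).symm
  have h5 : ∑ t ∈ Finset.univ.erase t0, s t * (b t0 - b t)
      = b t0 * (1 - s t0) - ∑ t ∈ Finset.univ.erase t0, s t * b t := by
    simp only [mul_sub]
    rw [Finset.sum_sub_distrib, ← Finset.sum_mul, h4]; ring
  have hbound : (1 - s t0) * A ≤ ∑ t ∈ Finset.univ.erase t0, s t * (b t0 - b t) := by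
    rw [← h4, Finset.sum_mul]
    refine Finset.sum_le_sum fun t ht => ?_
    exact mul_le_mul_of_nonneg_left (Finset.inf'_le _ ht) (hs t).le
  have hs0 : 0 < s t0 := hs t0
  have h1s : 0 < 1 - s t0 := by
    rw [← h4]
    exact Finset.sum_pos (fun t _ => hs t) (erase_nonempty_of_two_le hT t0)
  have hid : (∑ t, γ t * s t * b t) - (∑ t, γ t * s t) * (∑ t, s t * b t)
      = G * (s t0 * ∑ t ∈ Finset.univ.erase t0, s t * (b t0 - b t)) := by
    rw [h1, h2, h3, h5]; ring
  rw [hid]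
  nlinarith [mul_le_mul_of_nonneg_left hbound (mul_pos hG0 hs0).le]

lemma softmax_pos {T : ℕ} (hT : 0 < T) (a : Fin T → ℝ) (t : Fin T) : 0 < softmax a t :=
  div_pos (Real.exp_pos _)
    (Finset.sum_pos (fun _ _ => Real.exp_pos _) ⟨⟨0, hT⟩, Finset.mem_univ _⟩)

lemma softmax_sum {T : ℕ} (hT : 0 < T) (a : Fin T → ℝ) : ∑ t, softmax a t = 1 := by
  have hZ : (0:ℝ) < ∑ τ, Real.exp (a τ) :=
    Finset.sum_pos (fun _ _ => Real.exp_pos _) ⟨⟨0, hT⟩, Finset.mem_univ _⟩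
  simp only [softmax]
  rw [← Finset.sum_div, div_self hZ.ne']

/-- **Global descent (equal non-optimal scores).** If `ℓ` is differentiable and strictly
decreasing (`ℓ' < 0`), `p^{mm⋆}` is the minimal-norm solution of the SVM constraints, and for
each sample all non-optimal token scores coincide while the optimal score is strictly largest,
then `−⟪∇ℒ(p), p^{mm⋆}⟫ ≥ min_i {−ℓ'ᵢ · lgt'ᵢ · a_gapⁱ · γ_gapⁱ} > 0` for all `p`. -/
theorem global_descent_equal_scores (n d T : ℕ) (hn : 0 < n) (hT : 2 ≤ T)
    (X : Fin n → Matrix (Fin T) (Fin d) ℝ) (Y : Fin n → ℝ)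
    (hY : ∀ i, Y i = 1 ∨ Y i = -1)
    (v : Fin d → ℝ) (W : Matrix (Fin d) (Fin d) ℝ)
    (ℓ : ℝ → ℝ) (hdiff : Differentiable ℝ ℓ) (hanti : StrictAnti ℓ)
    (hderiv : ∀ x, deriv ℓ x < 0)
    (opt : Fin n → Fin T) (pmm : EuclideanSpace ℝ (Fin d))
    (hfeas : ∀ i, ∀ t, t ≠ opt i →
      1 ≤ ∑ j, (key X W i (opt i) j - key X W i t j) * pmm j)
    (hmin : ∀ q : EuclideanSpace ℝ (Fin d),
      (∀ i, ∀ t, t ≠ opt i → 1 ≤ ∑ j, (key X W i (opt i) j - key X W i t j) * q j) →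
      ‖pmm‖ ≤ ‖q‖)
    (hsame : ∀ i, ∀ t₁ t₂, t₁ ≠ opt i → t₂ ≠ opt i →
      score X Y v i t₁ = score X Y v i t₂)
    (hopt : ∀ i, ∀ t, t ≠ opt i → score X Y v i t < score X Y v i (opt i))
    (p : EuclideanSpace ℝ (Fin d)) :
    (Finset.univ.inf' (univ_nonempty_of_pos hn) (fun i =>
        -(deriv ℓ (∑ t, score X Y v i t * sprob X W i p t))
          * (sprob X W i p (opt i) * (1 - sprob X W i p (opt i)))
          * ((Finset.univ.erase (opt i)).inf' (erase_nonempty_of_two_le hT _) fun t =>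
              ∑ j, (key X W i (opt i) j - key X W i t j) * pmm j)
          * ((Finset.univ.erase (opt i)).inf' (erase_nonempty_of_two_le hT _) fun t =>
              score X Y v i (opt i) - score X Y v i t))
        ≤ -⟪gradient (tLoss ℓ X Y v W) p, pmm⟫)
    ∧ 0 < Finset.univ.inf' (univ_nonempty_of_pos hn) (fun i =>
        -(deriv ℓ (∑ t, score X Y v i t * sprob X W i p t))
          * (sprob X W i p (opt i) * (1 - sprob X W i p (opt i)))
          * ((Finset.univ.erase (opt i)).inf' (erase_nonempty_of_two_le hT _) fun t =>
              ∑ j, (key X W i (opt i) j - key X W i t j) * pmm j)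
          * ((Finset.univ.erase (opt i)).inf' (erase_nonempty_of_two_le hT _) fun t =>
              score X Y v i (opt i) - score X Y v i t)) := by
  classical
  have hT0 : 0 < T := by omega
  -- rewrite the key-difference inf' into b-form
  have hfg : ∀ i : Fin n, (fun t => ∑ j, (key X W i (opt i) j - key X W i t j) * pmm j)
      = fun t => (∑ j, key X W i (opt i) j * pmm j) - ∑ j, key X W i t j * pmm j := by
    intro i; funext t
    rw [← Finset.sum_sub_distrib]
    exact Finset.sum_congr rfl fun j _ => sub_mul _ _ _
  simp only [hfg]
  -- abbreviations
  set γ : Fin n → Fin T → ℝ := fun i => score X Y v i with hγdef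
  set s : Fin n → Fin T → ℝ := fun i => sprob X W i p with hsdef
  set b : Fin n → Fin T → ℝ := fun i t => ∑ j, key X W i t j * pmm j with hbdef
  -- the per-sample minimum candidates
  set m : Fin n → ℝ := fun i =>
    -(deriv ℓ (∑ t, γ i t * s i t)) * (s i (opt i) * (1 - s i (opt i)))
      * ((Finset.univ.erase (opt i)).inf' (erase_nonempty_of_two_le hT _) fun t =>
          b i (opt i) - b i t)
      * ((Finset.univ.erase (opt i)).inf' (erase_nonempty_of_two_le hT _) fun t =>
          γ i (opt i) - γ i t) with hmdef
  -- derivative data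
  have hsd := fun i : Fin n => sample_deriv hT0 ℓ hdiff (score X Y v i) (key X W i) p pmm
  choose L hL hLval using hsd
  have hF : HasFDerivAt (tLoss ℓ X Y v W) ((n:ℝ)⁻¹ • ∑ i, L i) p := by
    have hsum : HasFDerivAt (fun x : EuclideanSpace ℝ (Fin d) =>
        ∑ i, ℓ (∑ t, score X Y v i t * softmax (fun t => ∑ j, key X W i t j * x j) t))
        (∑ i, L i) p := HasFDerivAt.fun_sum fun i _ => hL i
    exact hsum.const_mul ((n:ℝ)⁻¹)
  have hinner : ⟪gradient (tLoss ℓ X Y v W) p, pmm⟫ = ((n:ℝ)⁻¹ • ∑ i, L i) pmm := by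
    rw [show gradient (tLoss ℓ X Y v W) p
        = (InnerProductSpace.toDual ℝ _).symm (fderiv ℝ (tLoss ℓ X Y v W) p) from rfl,
      InnerProductSpace.toDual_symm_apply, hF.fderiv]
  have hLval' : ∀ i, L i pmm = deriv ℓ (∑ t, γ i t * s i t) *
      ((∑ t, γ i t * s i t * b i t) - (∑ t, γ i t * s i t) * (∑ t, s i t * b i t)) :=
    fun i => hLval i
  -- per-sample facts
  have hspos : ∀ i t, 0 < s i t := fun i t => softmax_pos hT0 _ t
  have hssum : ∀ i, ∑ t, s i t = 1 := fun i => softmax_sum hT0 _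
  have hkey : ∀ i, m i ≤ -(L i pmm) ∧ 0 < m i := by
    intro i
    have hcov := cov_bound hT (s i) (γ i) (b i) (opt i) (hspos i) (hssum i)
      (hsame i) (hopt i)
    have hd : 0 < -(deriv ℓ (∑ t, γ i t * s i t)) := neg_pos.2 (hderiv _)
    have hA1 : (1:ℝ) ≤ (Finset.univ.erase (opt i)).inf'
        (erase_nonempty_of_two_le hT _) fun t => b i (opt i) - b i t := by
      refine Finset.le_inf' _ _ fun t ht => ?_
      have := hfeas i t (Finset.ne_of_mem_erase ht)
      calc (1:ℝ) ≤ ∑ j, (key X W i (opt i) j - key X W i t j) * pmm j := this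
        _ = b i (opt i) - b i t := congrFun (hfg i) t
    have hG0 : (0:ℝ) < (Finset.univ.erase (opt i)).inf'
        (erase_nonempty_of_two_le hT _) fun t => γ i (opt i) - γ i t := by
      rw [Finset.lt_inf'_iff]
      intro t ht
      have := hopt i t (Finset.ne_of_mem_erase ht)
      linarith
    have hs0 : 0 < s i (opt i) := hspos i (opt i)
    have h1s : 0 < 1 - s i (opt i) := by
      have h4 : ∑ t ∈ Finset.univ.erase (opt i), s i t = 1 - s i (opt i) := by
        rw [← hssum i, ← Finset.add_sum_erase _ (s i) (Finset.mem_univ (opt i))]; ring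
      rw [← h4]
      exact Finset.sum_pos (fun t _ => hspos i t) (erase_nonempty_of_two_le hT _)
    constructor
    · have hneg : -(L i pmm) = -(deriv ℓ (∑ t, γ i t * s i t)) *
          ((∑ t, γ i t * s i t * b i t) - (∑ t, γ i t * s i t) * (∑ t, s i t * b i t)) := by
        rw [hLval' i]; ring
      rw [hneg, hmdef]
      have step : s i (opt i) * (1 - s i (opt i)) *
          ((Finset.univ.erase (opt i)).inf' (erase_nonempty_of_two_le hT _) fun t =>
            b i (opt i) - b i t) *
          ((Finset.univ.erase (opt i)).inf' (erase_nonempty_of_two_le hT _) fun t =>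
            γ i (opt i) - γ i t)
          ≤ (∑ t, γ i t * s i t * b i t) - (∑ t, γ i t * s i t) * (∑ t, s i t * b i t) :=
        hcov
      calc -(deriv ℓ (∑ t, γ i t * s i t)) * (s i (opt i) * (1 - s i (opt i)))
            * ((Finset.univ.erase (opt i)).inf' (erase_nonempty_of_two_le hT _) fun t =>
                b i (opt i) - b i t)
            * ((Finset.univ.erase (opt i)).inf' (erase_nonempty_of_two_le hT _) fun t =>
                γ i (opt i) - γ i t)
          = -(deriv ℓ (∑ t, γ i t * s i t)) * (s i (opt i) * (1 - s i (opt i)) *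
            ((Finset.univ.erase (opt i)).inf' (erase_nonempty_of_two_le hT _) fun t =>
                b i (opt i) - b i t) *
            ((Finset.univ.erase (opt i)).inf' (erase_nonempty_of_two_le hT _) fun t =>
                γ i (opt i) - γ i t)) := by ring
        _ ≤ _ := mul_le_mul_of_nonneg_left step hd.le
    · rw [hmdef]
      have := mul_pos (mul_pos (mul_pos hd (mul_pos hs0 h1s)) (lt_of_lt_of_le one_pos hA1))
        hG0
      exact this
  constructor
  · -- min ≤ -inner
    rw [hinner]
    have hval : ((n:ℝ)⁻¹ • ∑ i, L i) pmm = (n:ℝ)⁻¹ * ∑ i, L i pmm := by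
      simp [ContinuousLinearMap.coe_sum', Finset.sum_apply]
    rw [hval]
    set M := Finset.univ.inf' (univ_nonempty_of_pos hn) m with hMdef
    have hMle : ∀ i : Fin n, M ≤ m i := fun i => Finset.inf'_le _ (Finset.mem_univ i)
    have hsum_ge : (n:ℝ) * M ≤ ∑ i, -(L i pmm) := by
      calc (n:ℝ) * M = ∑ _i : Fin n, M := by
            rw [Finset.sum_const, Finset.card_univ, Fintype.card_fin, nsmul_eq_mul]
        _ ≤ ∑ i, -(L i pmm) :=
            Finset.sum_le_sum fun i _ => le_trans (hMle i) (hkey i).1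
    have hn' : (0:ℝ) < n := Nat.cast_pos.2 hn
    have : M ≤ (n:ℝ)⁻¹ * ∑ i, -(L i pmm) := by
      calc M = (n:ℝ)⁻¹ * ((n:ℝ) * M) := by field_simp
        _ ≤ (n:ℝ)⁻¹ * ∑ i, -(L i pmm) :=
            mul_le_mul_of_nonneg_left hsum_ge (by positivity)
    calc M ≤ (n:ℝ)⁻¹ * ∑ i, -(L i pmm) := this
      _ = -((n:ℝ)⁻¹ * ∑ i, L i pmm) := by
          rw [Finset.sum_neg_distrib]; ring
  · -- positivity
    rw [Finset.lt_inf'_iff]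
    exact fun i _ => (hkey i).2
end

section
/- Suppose ℓ is differentiable and strictly decreasing (so ℓ' < 0 everywhere), the SVM constraints defining p^{mm⋆} are feasible, every token is a support vector, i.e. (k_{i,optᵢ} − k_{it})⊤p^{mm⋆} = 1 for all t ≠ optᵢ and all i, and γ_{i,optᵢ} > γ_{it} for all t ≠ optᵢ and all i. For p ∈ ℝ^d define ℓ'ᵢ = ℓ'(γᵢ⊤𝕊(Kᵢp)), p_{opt,i} = 𝕊(Kᵢp)_{optᵢ}, lgt'ᵢ = p_{opt,i}(1 − p_{opt,i}), a_gapⁱ = inf_{t≠optᵢ} (k_{i,optᵢ} − k_{it})⊤p^{mm⋆} and γ_gapⁱ = inf_{t≠optᵢ} (γ_{i,optᵢ} − γ_{it}). Then for every p ∈ ℝ^d: −⟨∇ℒ(p), p^{mm⋆}⟩ ≥ min_{i∈[n]} { −ℓ'ᵢ · lgt'ᵢ · a_gapⁱ · γ_gapⁱ } > 0. -/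
open scoped RealInnerProductSpace

section Aux

lemma sum_exp_pos' {T : ℕ} [NeZero T] (a : Fin T → ℝ) : 0 < ∑ τ, Real.exp (a τ) :=
  Finset.sum_pos (fun _ _ => Real.exp_pos _) Finset.univ_nonempty

lemma hasDerivAt_softmax_dot {T : ℕ} [NeZero T] (a b γ : Fin T → ℝ) :
    HasDerivAt (fun ε : ℝ => ∑ t, γ t *
        (Real.exp (a t + ε * b t) / ∑ τ, Real.exp (a τ + ε * b τ)))
      (∑ t, γ t * ((b t * Real.exp (a t) * (∑ τ, Real.exp (a τ))
          - Real.exp (a t) * (∑ τ, b τ * Real.exp (a τ))) / (∑ τ, Real.exp (a τ))^2)) 0 := by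
  have hnum : ∀ t : Fin T, HasDerivAt (fun ε : ℝ => Real.exp (a t + ε * b t))
      (b t * Real.exp (a t)) 0 := by
    intro t
    have h1 : HasDerivAt (fun ε : ℝ => a t + ε * b t) (b t) 0 := by
      simpa using ((hasDerivAt_id (0:ℝ)).mul_const (b t)).const_add (a t)
    simpa [mul_comm] using h1.exp
  have hden : HasDerivAt (fun ε : ℝ => ∑ τ, Real.exp (a τ + ε * b τ))
      (∑ τ, b τ * Real.exp (a τ)) 0 := HasDerivAt.fun_sum fun τ _ => hnum τ
  have hden0 : (∑ τ, Real.exp (a τ + (0:ℝ) * b τ)) ≠ 0 := by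
    simp only [zero_mul, add_zero]
    exact (sum_exp_pos' a).ne'
  have := HasDerivAt.fun_sum (u := Finset.univ) fun (t : Fin T) _ =>
    (((hnum t).fun_div hden hden0).const_mul (γ t))
  simpa only [zero_mul, add_zero] using this

lemma differentiable_tLoss_term {d T : ℕ} [NeZero T] (ℓ : ℝ → ℝ) (hdiff : Differentiable ℝ ℓ)
    (γ : Fin T → ℝ) (k : Fin T → Fin d → ℝ) :
    Differentiable ℝ (fun p : EuclideanSpace ℝ (Fin d) =>
      ℓ (∑ t, γ t * softmax (fun t => ∑ j, k t j * p j) t)) := by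
  have hcoord : ∀ j : Fin d, Differentiable ℝ (fun p : EuclideanSpace ℝ (Fin d) => p j) :=
    fun j => (EuclideanSpace.proj j : EuclideanSpace ℝ (Fin d) →L[ℝ] ℝ).differentiable
  have hlin : ∀ t : Fin T, Differentiable ℝ
      (fun p : EuclideanSpace ℝ (Fin d) => ∑ j, k t j * p j) :=
    fun t => Differentiable.fun_sum fun j _ => (hcoord j).const_mul _
  have hexp : ∀ t : Fin T, Differentiable ℝ
      (fun p : EuclideanSpace ℝ (Fin d) => Real.exp (∑ j, k t j * p j)) :=
    fun t => (hlin t).exp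
  apply hdiff.comp
  apply Differentiable.fun_sum
  intro t _
  apply Differentiable.const_mul
  simp only [softmax]
  have hden : Differentiable ℝ (fun p : EuclideanSpace ℝ (Fin d) =>
      ∑ τ, Real.exp (∑ j, k τ j * p j)) := Differentiable.fun_sum fun τ _ => hexp τ
  have hne : ∀ p : EuclideanSpace ℝ (Fin d), (∑ τ, Real.exp (∑ j, k τ j * p j)) ≠ 0 :=
    fun p => (sum_exp_pos' (fun τ => ∑ j, k τ j * p j)).ne'
  intro p
  simp only [div_eq_mul_inv]
  exact ((hexp t) p).mul (((hden) p).inv (hne p))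

lemma per_sample_ge {T : ℕ} (hT : 2 ≤ T) (a b γ : Fin T → ℝ) (t0 : Fin T)
    (hb : ∀ t, t ≠ t0 → b t0 - b t = 1) :
    haveI : NeZero T := ⟨by omega⟩
    (Real.exp (a t0) / ∑ τ, Real.exp (a τ)) * (1 - Real.exp (a t0) / ∑ τ, Real.exp (a τ))
      * ((Finset.univ.erase t0).inf' (erase_nonempty_of_two_le hT t0) fun t => γ t0 - γ t)
    ≤ ∑ t, γ t * ((b t * Real.exp (a t) * (∑ τ, Real.exp (a τ))
        - Real.exp (a t) * (∑ τ, b τ * Real.exp (a τ))) / (∑ τ, Real.exp (a τ))^2) := by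
  haveI : NeZero T := ⟨by omega⟩
  have hSpos : 0 < ∑ τ, Real.exp (a τ) := sum_exp_pos' a
  have hSne : (∑ τ, Real.exp (a τ)) ≠ 0 := hSpos.ne'
  set S : ℝ := ∑ τ, Real.exp (a τ) with hSdef
  set E : ℝ := ∑ t ∈ Finset.univ.erase t0, Real.exp (a t) with hEdef
  have hSE : S = Real.exp (a t0) + E :=
    (Finset.add_sum_erase _ _ (Finset.mem_univ t0)).symm
  have hS' : (∑ τ, b τ * Real.exp (a τ)) = b t0 * S - E := by
    rw [← Finset.add_sum_erase _ _ (Finset.mem_univ t0)]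
    have : ∑ t ∈ Finset.univ.erase t0, b t * Real.exp (a t)
        = ∑ t ∈ Finset.univ.erase t0, (b t0 - 1) * Real.exp (a t) := by
      refine Finset.sum_congr rfl fun t ht => ?_
      have := hb t (Finset.ne_of_mem_erase ht)
      have hbt : b t = b t0 - 1 := by linarith
      rw [hbt]
    rw [this, ← Finset.mul_sum, ← hEdef, hSE]
    ring
  set m : ℝ := (Finset.univ.erase t0).inf' (erase_nonempty_of_two_le hT t0)
      (fun t => γ t0 - γ t) with hmdef
  have key1 : (∑ t, γ t * ((b t * Real.exp (a t) * S
        - Real.exp (a t) * (∑ τ, b τ * Real.exp (a τ))) / S^2))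
      = ∑ t ∈ Finset.univ.erase t0,
          (Real.exp (a t0)/S) * (Real.exp (a t)/S) * (γ t0 - γ t) := by
    rw [hS', ← Finset.add_sum_erase _ _ (Finset.mem_univ t0)]
    have ht0term : γ t0 * ((b t0 * Real.exp (a t0) * S
        - Real.exp (a t0) * (b t0 * S - E)) / S^2)
        = ∑ t ∈ Finset.univ.erase t0,
            γ t0 * (Real.exp (a t0)/S) * (Real.exp (a t)/S) := by
      rw [← Finset.mul_sum]
      rw [show (∑ t ∈ Finset.univ.erase t0, Real.exp (a t) / S) = E / S by
        rw [hEdef, Finset.sum_div]]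
      field_simp
      ring
    rw [ht0term, ← Finset.sum_add_distrib]
    refine Finset.sum_congr rfl fun t ht => ?_
    have hbt : b t = b t0 - 1 := by have := hb t (Finset.ne_of_mem_erase ht); linarith
    have hE' : E = S - Real.exp (a t0) := by rw [hSE]; ring
    rw [hbt, hE']
    field_simp
    ring
  rw [key1]
  have hfrac : 1 - Real.exp (a t0)/S = E/S := by
    rw [eq_div_iff hSne, sub_mul, div_mul_cancel₀ _ hSne, hSE]; ring
  rw [hfrac]
  have hstep : ∀ t ∈ Finset.univ.erase t0,
      (Real.exp (a t0)/S) * (Real.exp (a t)/S) * m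
        ≤ (Real.exp (a t0)/S) * (Real.exp (a t)/S) * (γ t0 - γ t) := by
    intro t ht
    refine mul_le_mul_of_nonneg_left ?_ (by positivity)
    exact Finset.inf'_le _ ht
  calc Real.exp (a t0)/S * (E/S) * m
      = ∑ t ∈ Finset.univ.erase t0, (Real.exp (a t0)/S) * (Real.exp (a t)/S) * m := by
        rw [hEdef, Finset.sum_div, ← Finset.sum_mul, ← Finset.mul_sum]
    _ ≤ _ := Finset.sum_le_sum hstep

end Aux

/-- **Global descent (all tokens are support vectors).** If `ℓ` is differentiable and strictly
decreasing (`ℓ' < 0`), `p^{mm⋆}` is the minimal-norm solution of the SVM constraints, every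
token is a support vector (`(k_{i,optᵢ} − k_{it})⊤p^{mm⋆} = 1` for all `t ≠ optᵢ`), and the
optimal score is strictly largest in each sample, then
`−⟨∇ℒ(p), p^{mm⋆}⟩ ≥ min_i {−ℓ'ᵢ · lgt'ᵢ · a_gapⁱ · γ_gapⁱ} > 0` for all `p`. -/
theorem global_descent_all_support (n d T : ℕ) (hn : 0 < n) (hT : 2 ≤ T)
    (X : Fin n → Matrix (Fin T) (Fin d) ℝ) (Y : Fin n → ℝ)
    (hY : ∀ i, Y i = 1 ∨ Y i = -1)
    (v : Fin d → ℝ) (W : Matrix (Fin d) (Fin d) ℝ)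
    (ℓ : ℝ → ℝ) (hdiff : Differentiable ℝ ℓ) (hanti : StrictAnti ℓ)
    (hderiv : ∀ x, deriv ℓ x < 0)
    (opt : Fin n → Fin T) (pmm : EuclideanSpace ℝ (Fin d))
    (hfeas : ∀ i, ∀ t, t ≠ opt i →
      1 ≤ ∑ j, (key X W i (opt i) j - key X W i t j) * pmm j)
    (hmin : ∀ q : EuclideanSpace ℝ (Fin d),
      (∀ i, ∀ t, t ≠ opt i → 1 ≤ ∑ j, (key X W i (opt i) j - key X W i t j) * q j) →
      ‖pmm‖ ≤ ‖q‖)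
    (hsupp : ∀ i, ∀ t, t ≠ opt i →
      ∑ j, (key X W i (opt i) j - key X W i t j) * pmm j = 1)
    (hopt : ∀ i, ∀ t, t ≠ opt i → score X Y v i t < score X Y v i (opt i))
    (p : EuclideanSpace ℝ (Fin d)) :
    (Finset.univ.inf' (univ_nonempty_of_pos hn) (fun i =>
        -(deriv ℓ (∑ t, score X Y v i t * sprob X W i p t))
          * (sprob X W i p (opt i) * (1 - sprob X W i p (opt i)))
          * ((Finset.univ.erase (opt i)).inf' (erase_nonempty_of_two_le hT _) fun t =>
              ∑ j, (key X W i (opt i) j - key X W i t j) * pmm j)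
          * ((Finset.univ.erase (opt i)).inf' (erase_nonempty_of_two_le hT _) fun t =>
              score X Y v i (opt i) - score X Y v i t))
        ≤ -⟪gradient (tLoss ℓ X Y v W) p, pmm⟫)
    ∧ 0 < Finset.univ.inf' (univ_nonempty_of_pos hn) (fun i =>
        -(deriv ℓ (∑ t, score X Y v i t * sprob X W i p t))
          * (sprob X W i p (opt i) * (1 - sprob X W i p (opt i)))
          * ((Finset.univ.erase (opt i)).inf' (erase_nonempty_of_two_le hT _) fun t =>
              ∑ j, (key X W i (opt i) j - key X W i t j) * pmm j)
          * ((Finset.univ.erase (opt i)).inf' (erase_nonempty_of_two_le hT _) fun t =>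
              score X Y v i (opt i) - score X Y v i t)) := by
  haveI : NeZero T := ⟨by omega⟩
  have hnR : (n:ℝ) ≠ 0 := Nat.cast_ne_zero.mpr hn.ne'
  -- differentiability of the loss
  have hdiffL : Differentiable ℝ (tLoss ℓ X Y v W) := by
    have h : ∀ i : Fin n, Differentiable ℝ (fun q : EuclideanSpace ℝ (Fin d) =>
        ℓ (∑ t, score X Y v i t * softmax (fun t => ∑ j, key X W i t j * q j) t)) :=
      fun i => differentiable_tLoss_term ℓ hdiff _ _
    unfold tLoss sprob
    exact Differentiable.const_mul (Differentiable.fun_sum fun i _ => h i) _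
  -- the line derivative equals the directional derivative
  have h1 : HasDerivAt (fun ε : ℝ => p + ε • pmm) pmm 0 := by
    simpa using ((hasDerivAt_id (0:ℝ)).smul_const pmm).const_add p
  have h0 : p + (0:ℝ) • pmm = p := by simp
  have hfd : HasFDerivAt (tLoss ℓ X Y v W) (fderiv ℝ (tLoss ℓ X Y v W) p)
      ((fun ε : ℝ => p + ε • pmm) 0) := by
    show HasFDerivAt _ _ (p + (0:ℝ) • pmm)
    rw [h0]
    exact (hdiffL p).hasFDerivAt
  have hline : HasDerivAt (fun ε : ℝ => tLoss ℓ X Y v W (p + ε • pmm))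
      (fderiv ℝ (tLoss ℓ X Y v W) p pmm) 0 := by
    have := hfd.comp_hasDerivAt 0 h1
    exact this
  -- explicit form of the line function and its derivative
  have hargs : ∀ (ε : ℝ) (i : Fin n) (t : Fin T),
      (∑ j, key X W i t j * (p + ε • pmm) j)
        = (∑ j, key X W i t j * p j) + ε * (∑ j, key X W i t j * pmm j) := by
    intro ε i t
    rw [Finset.mul_sum, ← Finset.sum_add_distrib]
    refine Finset.sum_congr rfl fun j _ => ?_
    have hj : (p + ε • pmm) j = p j + ε * pmm j := rfl
    rw [hj]; ring
  have hfun : (fun ε : ℝ => tLoss ℓ X Y v W (p + ε • pmm)) = fun ε =>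
      (n:ℝ)⁻¹ * ∑ i, ℓ (∑ t, score X Y v i t *
        (Real.exp ((∑ j, key X W i t j * p j) + ε * (∑ j, key X W i t j * pmm j))
          / ∑ τ, Real.exp ((∑ j, key X W i τ j * p j) + ε * (∑ j, key X W i τ j * pmm j)))) := by
    funext ε
    simp only [tLoss, sprob, softmax, hargs ε]
  have hexplicit : HasDerivAt (fun ε : ℝ => tLoss ℓ X Y v W (p + ε • pmm))
      ((n:ℝ)⁻¹ * ∑ i, deriv ℓ (∑ t, score X Y v i t * sprob X W i p t) *
        (∑ t, score X Y v i t *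
          (((∑ j, key X W i t j * pmm j) * Real.exp (∑ j, key X W i t j * p j)
              * (∑ τ, Real.exp (∑ j, key X W i τ j * p j))
            - Real.exp (∑ j, key X W i t j * p j)
              * (∑ τ, (∑ j, key X W i τ j * pmm j) * Real.exp (∑ j, key X W i τ j * p j)))
            / (∑ τ, Real.exp (∑ j, key X W i τ j * p j))^2))) 0 := by
    rw [hfun]
    refine HasDerivAt.const_mul _ (HasDerivAt.fun_sum fun i _ => ?_)
    have hin := hasDerivAt_softmax_dot (fun t => ∑ j, key X W i t j * p j)
      (fun t => ∑ j, key X W i t j * pmm j) (fun t => score X Y v i t)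
    have hℓ : HasDerivAt ℓ (deriv ℓ (∑ t, score X Y v i t * sprob X W i p t))
        (∑ t, score X Y v i t *
          (Real.exp ((∑ j, key X W i t j * p j) + (0:ℝ) * (∑ j, key X W i t j * pmm j))
            / ∑ τ, Real.exp ((∑ j, key X W i τ j * p j)
                + (0:ℝ) * (∑ j, key X W i τ j * pmm j)))) := by
      have heq : (∑ t, score X Y v i t *
          (Real.exp ((∑ j, key X W i t j * p j) + (0:ℝ) * (∑ j, key X W i t j * pmm j))
            / ∑ τ, Real.exp ((∑ j, key X W i τ j * p j)
                + (0:ℝ) * (∑ j, key X W i τ j * pmm j))))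
          = ∑ t, score X Y v i t * sprob X W i p t := by
        simp [sprob, softmax]
      rw [heq]
      exact (hdiff _).hasDerivAt
    have := hℓ.comp 0 hin
    exact this
  have hDval : fderiv ℝ (tLoss ℓ X Y v W) p pmm
      = (n:ℝ)⁻¹ * ∑ i, deriv ℓ (∑ t, score X Y v i t * sprob X W i p t) *
        (∑ t, score X Y v i t *
          (((∑ j, key X W i t j * pmm j) * Real.exp (∑ j, key X W i t j * p j)
              * (∑ τ, Real.exp (∑ j, key X W i τ j * p j))
            - Real.exp (∑ j, key X W i t j * p j)
              * (∑ τ, (∑ j, key X W i τ j * pmm j) * Real.exp (∑ j, key X W i τ j * p j)))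
            / (∑ τ, Real.exp (∑ j, key X W i τ j * p j))^2)) :=
    hline.unique hexplicit
  have hinner : ⟪gradient (tLoss ℓ X Y v W) p, pmm⟫ = fderiv ℝ (tLoss ℓ X Y v W) p pmm := by
    rw [gradient, InnerProductSpace.toDual_symm_apply]
  -- difference of b-values equals the support-vector quantity
  have hb : ∀ i, ∀ t, t ≠ opt i →
      (∑ j, key X W i (opt i) j * pmm j) - (∑ j, key X W i t j * pmm j) = 1 := by
    intro i t ht
    rw [← hsupp i t ht, ← Finset.sum_sub_distrib]
    exact Finset.sum_congr rfl fun j _ => by ring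
  have hAinf : ∀ i, ((Finset.univ.erase (opt i)).inf' (erase_nonempty_of_two_le hT _)
      fun t => ∑ j, (key X W i (opt i) j - key X W i t j) * pmm j) = 1 := by
    intro i
    apply le_antisymm
    · obtain ⟨t, ht⟩ := erase_nonempty_of_two_le hT (opt i)
      exact le_trans (Finset.inf'_le _ ht)
        (le_of_eq (hsupp i t (Finset.ne_of_mem_erase ht)))
    · exact Finset.le_inf' _ _ fun t ht => (hsupp i t (Finset.ne_of_mem_erase ht)).ge
  -- positivity facts
  have hSpos : ∀ i : Fin n, 0 < ∑ τ, Real.exp (∑ j, key X W i τ j * p j) :=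
    fun i => sum_exp_pos' _
  have hspos : ∀ i, 0 < sprob X W i p (opt i) := by
    intro i
    simp only [sprob, softmax]
    exact div_pos (Real.exp_pos _) (hSpos i)
  have hslt1 : ∀ i, sprob X W i p (opt i) < 1 := by
    intro i
    simp only [sprob, softmax]
    rw [div_lt_one (hSpos i)]
    have hE : 0 < ∑ t ∈ Finset.univ.erase (opt i), Real.exp (∑ j, key X W i t j * p j) :=
      Finset.sum_pos (fun _ _ => Real.exp_pos _) (erase_nonempty_of_two_le hT (opt i))
    have hsplit := Finset.add_sum_erase Finset.univ
      (fun t => Real.exp (∑ j, key X W i t j * p j)) (Finset.mem_univ (opt i))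
    linarith [hsplit.symm.le]
  have hGinfpos : ∀ i, 0 < (Finset.univ.erase (opt i)).inf' (erase_nonempty_of_two_le hT _)
      (fun t => score X Y v i (opt i) - score X Y v i t) := by
    intro i
    rw [Finset.lt_inf'_iff]
    exact fun t ht => sub_pos.mpr (hopt i t (Finset.ne_of_mem_erase ht))
  have hdneg : ∀ x : ℝ, 0 < -(deriv ℓ x) := fun x => neg_pos.mpr (hderiv x)
  -- per-sample lower bound
  have hper : ∀ i : Fin n, sprob X W i p (opt i) * (1 - sprob X W i p (opt i))
        * ((Finset.univ.erase (opt i)).inf' (erase_nonempty_of_two_le hT _)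
            fun t => score X Y v i (opt i) - score X Y v i t)
      ≤ (∑ t, score X Y v i t *
          (((∑ j, key X W i t j * pmm j) * Real.exp (∑ j, key X W i t j * p j)
              * (∑ τ, Real.exp (∑ j, key X W i τ j * p j))
            - Real.exp (∑ j, key X W i t j * p j)
              * (∑ τ, (∑ j, key X W i τ j * pmm j) * Real.exp (∑ j, key X W i τ j * p j)))
            / (∑ τ, Real.exp (∑ j, key X W i τ j * p j))^2)) := by
    intro i
    have := per_sample_ge hT (fun t => ∑ j, key X W i t j * p j)
      (fun t => ∑ j, key X W i t j * pmm j) (fun t => score X Y v i t) (opt i) (hb i)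
    simpa [sprob, softmax] using this
  -- name the minimum
  set M : ℝ := Finset.univ.inf' (univ_nonempty_of_pos hn) (fun i =>
      -(deriv ℓ (∑ t, score X Y v i t * sprob X W i p t))
        * (sprob X W i p (opt i) * (1 - sprob X W i p (opt i)))
        * ((Finset.univ.erase (opt i)).inf' (erase_nonempty_of_two_le hT _) fun t =>
            ∑ j, (key X W i (opt i) j - key X W i t j) * pmm j)
        * ((Finset.univ.erase (opt i)).inf' (erase_nonempty_of_two_le hT _) fun t =>
            score X Y v i (opt i) - score X Y v i t)) with hMdef
  have htermpos : ∀ i : Fin n, 0 <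
      -(deriv ℓ (∑ t, score X Y v i t * sprob X W i p t))
        * (sprob X W i p (opt i) * (1 - sprob X W i p (opt i)))
        * ((Finset.univ.erase (opt i)).inf' (erase_nonempty_of_two_le hT _) fun t =>
            ∑ j, (key X W i (opt i) j - key X W i t j) * pmm j)
        * ((Finset.univ.erase (opt i)).inf' (erase_nonempty_of_two_le hT _) fun t =>
            score X Y v i (opt i) - score X Y v i t) := by
    intro i
    rw [hAinf i, mul_one]
    exact mul_pos (mul_pos (hdneg _)
      (mul_pos (hspos i) (sub_pos.mpr (hslt1 i)))) (hGinfpos i)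
  constructor
  · -- main inequality
    rw [hinner, hDval]
    have hMle : ∀ i : Fin n, M ≤
        (-(deriv ℓ (∑ t, score X Y v i t * sprob X W i p t))) *
        (∑ t, score X Y v i t *
          (((∑ j, key X W i t j * pmm j) * Real.exp (∑ j, key X W i t j * p j)
              * (∑ τ, Real.exp (∑ j, key X W i τ j * p j))
            - Real.exp (∑ j, key X W i t j * p j)
              * (∑ τ, (∑ j, key X W i τ j * pmm j) * Real.exp (∑ j, key X W i τ j * p j)))
            / (∑ τ, Real.exp (∑ j, key X W i τ j * p j))^2)) := by
      intro i
      refine le_trans (Finset.inf'_le _ (Finset.mem_univ i)) ?_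
      have heq : -(deriv ℓ (∑ t, score X Y v i t * sprob X W i p t))
          * (sprob X W i p (opt i) * (1 - sprob X W i p (opt i)))
          * ((Finset.univ.erase (opt i)).inf' (erase_nonempty_of_two_le hT _) fun t =>
              ∑ j, (key X W i (opt i) j - key X W i t j) * pmm j)
          * ((Finset.univ.erase (opt i)).inf' (erase_nonempty_of_two_le hT _) fun t =>
              score X Y v i (opt i) - score X Y v i t)
          = (-(deriv ℓ (∑ t, score X Y v i t * sprob X W i p t))) *
            (sprob X W i p (opt i) * (1 - sprob X W i p (opt i))
              * ((Finset.univ.erase (opt i)).inf' (erase_nonempty_of_two_le hT _) fun t =>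
                  score X Y v i (opt i) - score X Y v i t)) := by
        rw [hAinf i]; ring
      rw [heq]
      exact mul_le_mul_of_nonneg_left (hper i) (le_of_lt (hdneg _))
    have hsum : (n:ℝ) * M ≤ ∑ i, (-(deriv ℓ (∑ t, score X Y v i t * sprob X W i p t))) *
        (∑ t, score X Y v i t *
          (((∑ j, key X W i t j * pmm j) * Real.exp (∑ j, key X W i t j * p j)
              * (∑ τ, Real.exp (∑ j, key X W i τ j * p j))
            - Real.exp (∑ j, key X W i t j * p j)
              * (∑ τ, (∑ j, key X W i τ j * pmm j) * Real.exp (∑ j, key X W i τ j * p j)))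
            / (∑ τ, Real.exp (∑ j, key X W i τ j * p j))^2)) := by
      calc (n:ℝ) * M = ∑ _i : Fin n, M := by
            rw [Finset.sum_const, Finset.card_univ, Fintype.card_fin, nsmul_eq_mul]
        _ ≤ _ := Finset.sum_le_sum fun i _ => hMle i
    have hneg : -((n:ℝ)⁻¹ * ∑ i, deriv ℓ (∑ t, score X Y v i t * sprob X W i p t) *
        (∑ t, score X Y v i t *
          (((∑ j, key X W i t j * pmm j) * Real.exp (∑ j, key X W i t j * p j)
              * (∑ τ, Real.exp (∑ j, key X W i τ j * p j))
            - Real.exp (∑ j, key X W i t j * p j)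
              * (∑ τ, (∑ j, key X W i τ j * pmm j) * Real.exp (∑ j, key X W i τ j * p j)))
            / (∑ τ, Real.exp (∑ j, key X W i τ j * p j))^2)))
        = (n:ℝ)⁻¹ * ∑ i, (-(deriv ℓ (∑ t, score X Y v i t * sprob X W i p t))) *
        (∑ t, score X Y v i t *
          (((∑ j, key X W i t j * pmm j) * Real.exp (∑ j, key X W i t j * p j)
              * (∑ τ, Real.exp (∑ j, key X W i τ j * p j))
            - Real.exp (∑ j, key X W i t j * p j)
              * (∑ τ, (∑ j, key X W i τ j * pmm j) * Real.exp (∑ j, key X W i τ j * p j)))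
            / (∑ τ, Real.exp (∑ j, key X W i τ j * p j))^2)) := by
      rw [← mul_neg, ← Finset.sum_neg_distrib]
      congr 1
      exact Finset.sum_congr rfl fun i _ => (neg_mul _ _).symm
    rw [hneg]
    calc M = (n:ℝ)⁻¹ * ((n:ℝ) * M) := by field_simp
      _ ≤ _ := mul_le_mul_of_nonneg_left hsum (by positivity)
  · rw [Finset.lt_inf'_iff]
    exact fun i _ => htermpos i
end

section
/- Suppose ℓ : ℝ → ℝ is differentiable and nonnegative, |ℓ'(x)| ≤ M₁ for all x, and ℓ' is M₀-Lipschitz. Then there exists a constant L > 0 (depending only on M₀, M₁, ‖v‖, ‖W‖ and the norms ‖Xᵢ‖) such that ∇ℒ is L-Lipschitz on ℝ^d; moreover, for any initialization p(0) and gradient descent iterates p(t+1) = p(t) − η∇ℒ(p(t)) with step size 0 < η < 2/L, for all t ≥ 0 one has ℒ(p(t+1)) − ℒ(p(t)) ≤ −η(1 − Lη/2)‖∇ℒ(p(t))‖², the series Σ_{t=0}^∞ ‖∇ℒ(p(t))‖² converges, and ‖∇ℒ(p(t))‖ → 0 as t → ∞. -/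
open scoped RealInnerProductSpace

open intervalIntegral in
lemma myIntegralId (a b : ℝ) : ∫ x in a..b, x = (b ^ 2 - a ^ 2) / 2 := integral_id
open intervalIntegral in
lemma myIntervalIntegrableId (a b : ℝ) : IntervalIntegrable (fun x : ℝ => x) MeasureTheory.volume a b := intervalIntegrable_id

section Abstract
variable {E : Type*} [NormedAddCommGroup E] [InnerProductSpace ℝ E] [CompleteSpace E]

lemma quad_upper (f : E → ℝ) (g : E → E) (L : ℝ) (hL : 0 ≤ L)
    (hg : ∀ x, HasGradientAt f (g x) x)
    (hlip : ∀ x y, ‖g x - g y‖ ≤ L * ‖x - y‖) (p q : E) :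
    f q ≤ f p + ⟪g p, q - p⟫ + L / 2 * ‖q - p‖ ^ 2 := by
  set u := q - p with hu
  set c : ℝ → E := fun s => p + s • u with hc
  have hcd : ∀ s : ℝ, HasDerivAt c u s := by
    intro s
    have : HasDerivAt (fun s : ℝ => s • u) ((1:ℝ) • u) s := (hasDerivAt_id s).smul_const u
    have h2 := this.const_add p
    rw [one_smul] at h2
    exact h2
  set φ' : ℝ → ℝ := fun s => ⟪g (c s), u⟫ with hφ'
  have hgcont : Continuous g := by
    have : LipschitzWith ⟨L, hL⟩ g := by
      apply LipschitzWith.of_dist_le_mul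
      intro x y; rw [dist_eq_norm, dist_eq_norm]; exact hlip x y
    exact this.continuous
  have hφcont : Continuous φ' := by
    exact Continuous.inner (hgcont.comp (by continuity)) continuous_const
  have hder : ∀ s : ℝ, HasDerivAt (fun s => f (c s)) (φ' s) s := by
    intro s
    have h1 := (hg (c s)).hasFDerivAt.comp_hasDerivAt s (hcd s)
    rw [InnerProductSpace.toDual_apply_apply] at h1
    exact h1
  have key : f q - f p = ∫ s in (0:ℝ)..1, φ' s := by
    have := intervalIntegral.integral_eq_sub_of_hasDerivAt
      (f := fun s => f (c s)) (f' := φ') (a := 0) (b := 1)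
      (fun s _ => hder s) (hφcont.intervalIntegrable 0 1)
    simp only [hc] at this
    simp only [this]
    norm_num [hu]
  have hbound : ∀ s ∈ Set.Icc (0:ℝ) 1, φ' s ≤ ⟪g p, u⟫ + (L * ‖u‖ ^ 2) * s := by
    intro s hs
    have h1 : φ' s - ⟪g p, u⟫ = ⟪g (c s) - g p, u⟫ := by
      simp [hφ', inner_sub_left]
    have h2 : ⟪g (c s) - g p, u⟫ ≤ ‖g (c s) - g p‖ * ‖u‖ := real_inner_le_norm _ _
    have h3 : ‖g (c s) - g p‖ ≤ L * (s * ‖u‖) := by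
      have := hlip (c s) p
      have hc' : c s - p = s • u := by simp [hc]
      have : ‖g (c s) - g p‖ ≤ L * ‖s • u‖ := by simpa [hc'] using this
      simpa [norm_smul, abs_of_nonneg hs.1, mul_assoc] using this
    nlinarith [norm_nonneg u, mul_le_mul_of_nonneg_right h3 (norm_nonneg u)]
  have hint : (∫ s in (0:ℝ)..1, φ' s) ≤ ∫ s in (0:ℝ)..1, (⟪g p, u⟫ + (L * ‖u‖ ^ 2) * s) := by
    apply intervalIntegral.integral_mono_on (by norm_num)
      (hφcont.intervalIntegrable 0 1)
      ((continuous_const.add (continuous_const.mul continuous_id)).intervalIntegrable 0 1)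
    exact hbound
  have hval : (∫ s in (0:ℝ)..1, (⟪g p, u⟫ + (L * ‖u‖ ^ 2) * s)) = ⟪g p, u⟫ + L / 2 * ‖u‖ ^ 2 := by
    rw [intervalIntegral.integral_add (intervalIntegrable_const)
      ((myIntervalIntegrableId 0 1).const_mul _)]
    rw [intervalIntegral.integral_const_mul]
    simp [myIntegralId]
    ring
  rw [hval] at hint
  linarith [key, hint]



lemma gd_consequences (f : E → ℝ) (g : E → E) (L : ℝ) (hL : 0 < L)
    (hf0 : ∀ x, 0 ≤ f x)
    (hquad : ∀ p q : E, f q ≤ f p + ⟪g p, q - p⟫ + L / 2 * ‖q - p‖ ^ 2)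
    (p : ℕ → E) (η : ℝ) (hη : 0 < η) (hη2 : η < 2 / L)
    (hp : ∀ t, p (t + 1) = p t - η • g (p t)) :
    (∀ t, f (p (t + 1)) - f (p t) ≤ -(η * (1 - L * η / 2)) * ‖g (p t)‖ ^ 2)
    ∧ Summable (fun t => ‖g (p t)‖ ^ 2)
    ∧ Filter.Tendsto (fun t => ‖g (p t)‖) Filter.atTop (nhds 0) := by
  have hc : 0 < η * (1 - L * η / 2) := by
    have h1 : η * L < 2 := (lt_div_iff₀ hL).mp hη2
    nlinarith
  set c := η * (1 - L * η / 2) with hcdef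
  have step : ∀ t, f (p (t + 1)) - f (p t) ≤ -c * ‖g (p t)‖ ^ 2 := by
    intro t
    have h := hquad (p t) (p (t + 1))
    rw [hp t] at h ⊢
    have hdiff : p t - η • g (p t) - p t = -(η • g (p t)) := by abel
    rw [hdiff] at h
    have hinner : ⟪g (p t), -(η • g (p t))⟫ = -(η * ‖g (p t)‖ ^ 2) := by
      rw [inner_neg_right, real_inner_smul_right, real_inner_self_eq_norm_sq]
    have hnorm : ‖-(η • g (p t))‖ ^ 2 = η ^ 2 * ‖g (p t)‖ ^ 2 := by
      rw [norm_neg, norm_smul, mul_pow, Real.norm_eq_abs, sq_abs]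
    rw [hinner, hnorm] at h
    nlinarith [h]
  have partial_bound : ∀ N, c * ∑ t ∈ Finset.range N, ‖g (p t)‖ ^ 2 + f (p N) ≤ f (p 0) := by
    intro N
    induction N with
    | zero => simp
    | succ N ih =>
      rw [Finset.sum_range_succ]
      have := step N
      linarith
  have hsummable : Summable (fun t => ‖g (p t)‖ ^ 2) := by
    apply summable_of_sum_range_le (c := f (p 0) / c) (fun t => sq_nonneg _)
    intro N
    have hb := partial_bound N
    have h0 := hf0 (p N)
    rw [le_div_iff₀ hc]
    nlinarith
  refine ⟨step, hsummable, ?_⟩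
  have h2 : Filter.Tendsto (fun t => ‖g (p t)‖ ^ 2) Filter.atTop (nhds 0) :=
    hsummable.tendsto_atTop_zero
  have h3 := (Real.continuous_sqrt.tendsto 0).comp h2
  rw [Real.sqrt_zero] at h3
  exact h3.congr fun t => Real.sqrt_sq (norm_nonneg _)

end Abstract
open Finset
set_option synthInstance.maxHeartbeats 1000000
set_option maxHeartbeats 1600000

variable {d T : ℕ}

local notation "E" => EuclideanSpace ℝ (Fin d)

/-- Denominator of softmax along directions `k`. -/
noncomputable def smD (k : Fin T → EuclideanSpace ℝ (Fin d)) (p : EuclideanSpace ℝ (Fin d)) : ℝ :=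
  ∑ τ, Real.exp ⟪k τ, p⟫

/-- Softmax probability. -/
noncomputable def sm (k : Fin T → EuclideanSpace ℝ (Fin d)) (t : Fin T)
    (p : EuclideanSpace ℝ (Fin d)) : ℝ :=
  Real.exp ⟪k t, p⟫ / smD k p

/-- Weighted softmax score. -/
noncomputable def smf (γ : Fin T → ℝ) (k : Fin T → EuclideanSpace ℝ (Fin d))
    (p : EuclideanSpace ℝ (Fin d)) : ℝ :=
  ∑ t, γ t * sm k t p

/-- Gradient of `smf`. -/
noncomputable def smV (γ : Fin T → ℝ) (k : Fin T → EuclideanSpace ℝ (Fin d))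
    (p : EuclideanSpace ℝ (Fin d)) : EuclideanSpace ℝ (Fin d) :=
  ∑ t, (γ t * sm k t p) • (k t - ∑ τ, sm k τ p • k τ)

/-- Frechet derivative of `sm k t`. -/
noncomputable def smDσ (k : Fin T → EuclideanSpace ℝ (Fin d)) (t : Fin T)
    (p : EuclideanSpace ℝ (Fin d)) : EuclideanSpace ℝ (Fin d) →L[ℝ] ℝ :=
  sm k t p • (innerSL ℝ (k t) - ∑ τ, sm k τ p • innerSL ℝ (k τ))

lemma smD_pos (k : Fin T → E) (p : E) (t : Fin T) : 0 < smD k p := by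
  have : Real.exp ⟪k t, p⟫ ≤ smD k p :=
    Finset.single_le_sum (f := fun τ => Real.exp ⟪k τ, p⟫)
      (fun τ _ => (Real.exp_pos _).le) (mem_univ t)
  exact lt_of_lt_of_le (Real.exp_pos _) this

lemma sm_nonneg (k : Fin T → E) (t : Fin T) (p : E) : 0 ≤ sm k t p :=
  div_nonneg (Real.exp_pos _).le (smD_pos k p t).le

lemma sm_le_one (k : Fin T → E) (t : Fin T) (p : E) : sm k t p ≤ 1 := by
  rw [sm, div_le_one (smD_pos k p t)]
  exact Finset.single_le_sum (f := fun τ => Real.exp ⟪k τ, p⟫)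
    (fun τ _ => (Real.exp_pos _).le) (mem_univ t)

lemma hasFDerivAt_inner_const (k p : E) :
    HasFDerivAt (fun q : EuclideanSpace ℝ (Fin d) => ⟪k, q⟫) (innerSL ℝ k) p :=
  (innerSL ℝ k).hasFDerivAt

lemma hasFDerivAt_exp_inner (k p : E) :
    HasFDerivAt (fun q : EuclideanSpace ℝ (Fin d) => Real.exp ⟪k, q⟫)
      (Real.exp ⟪k, p⟫ • innerSL ℝ k) p :=
  (Real.hasDerivAt_exp _).comp_hasFDerivAt p (hasFDerivAt_inner_const k p)

lemma hasFDerivAt_smD (k : Fin T → E) (p : E) :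
    HasFDerivAt (smD k) (∑ τ, Real.exp ⟪k τ, p⟫ • innerSL ℝ (k τ)) p :=
  HasFDerivAt.fun_sum fun τ _ => hasFDerivAt_exp_inner (k τ) p

lemma hasFDerivAt_sm (k : Fin T → E) (t : Fin T) (p : E) :
    HasFDerivAt (sm k t) (smDσ k t p) p := by
  have hD := (smD_pos k p t).ne'
  have hinv : HasFDerivAt (fun q : EuclideanSpace ℝ (Fin d) => (smD k q)⁻¹)
      ((-((smD k p) ^ 2)⁻¹) • (∑ τ, Real.exp ⟪k τ, p⟫ • innerSL ℝ (k τ))) p :=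
    (hasDerivAt_inv hD).comp_hasFDerivAt p (hasFDerivAt_smD k p)
  have h := (hasFDerivAt_exp_inner (k t) p).mul hinv
  have hfun : sm k t = fun q : EuclideanSpace ℝ (Fin d) =>
      Real.exp ⟪k t, q⟫ * (smD k q)⁻¹ := by
    funext q; rw [sm, div_eq_mul_inv]
  rw [hfun]
  refine h.congr_fderiv ?_
  symm
  ext e
  simp only [smDσ, ContinuousLinearMap.smul_apply, ContinuousLinearMap.sub_apply,
    ContinuousLinearMap.sum_apply, ContinuousLinearMap.add_apply, innerSL_apply_apply, smul_eq_mul]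
  have hsum : ∀ c : Fin T → ℝ, ∑ τ, sm k τ p * c τ = (∑ τ, Real.exp ⟪k τ, p⟫ * c τ) / smD k p := by
    intro c
    rw [Finset.sum_div]
    exact Finset.sum_congr rfl fun τ _ => by rw [sm, div_mul_eq_mul_div]
  rw [hsum]
  simp only [sm]
  field_simp
  ring

lemma hasFDerivAt_smf (γ : Fin T → ℝ) (k : Fin T → E) (p : E) :
    HasFDerivAt (smf γ k) (∑ t, γ t • smDσ k t p) p :=
  HasFDerivAt.fun_sum fun t _ => (hasFDerivAt_sm k t p).const_mul (γ t)

lemma toDual_smV (γ : Fin T → ℝ) (k : Fin T → E) (p : E) :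
    (InnerProductSpace.toDual ℝ (EuclideanSpace ℝ (Fin d))) (smV γ k p)
      = ∑ t, γ t • smDσ k t p := by
  ext e
  simp only [InnerProductSpace.toDual_apply_apply, smV, smDσ, sum_inner, real_inner_smul_left,
    inner_sub_left, ContinuousLinearMap.sum_apply, ContinuousLinearMap.smul_apply,
    ContinuousLinearMap.sub_apply, innerSL_apply_apply, smul_eq_mul]
  exact Finset.sum_congr rfl fun t _ => by ring

lemma hasGradientAt_smf (γ : Fin T → ℝ) (k : Fin T → E) (p : E) :
    HasGradientAt (smf γ k) (smV γ k p) p := by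
  rw [hasGradientAt_iff_hasFDerivAt, toDual_smV]
  exact hasFDerivAt_smf γ k p

/-- Sum of key norms. -/
noncomputable def kap (k : Fin T → EuclideanSpace ℝ (Fin d)) : ℝ := ∑ t, ‖k t‖
/-- Sum of score magnitudes. -/
noncomputable def gam (γ : Fin T → ℝ) : ℝ := ∑ t, |γ t|

lemma kap_nonneg (k : Fin T → E) : 0 ≤ kap k := Finset.sum_nonneg fun _ _ => norm_nonneg _
lemma gam_nonneg (γ : Fin T → ℝ) : 0 ≤ gam γ := Finset.sum_nonneg fun _ _ => abs_nonneg _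
lemma norm_k_le_kap (k : Fin T → E) (t : Fin T) : ‖k t‖ ≤ kap k :=
  Finset.single_le_sum (fun τ _ => norm_nonneg (k τ)) (mem_univ t)
lemma abs_γ_le_gam (γ : Fin T → ℝ) (t : Fin T) : |γ t| ≤ gam γ :=
  Finset.single_le_sum (fun τ _ => abs_nonneg (γ τ)) (mem_univ t)

lemma norm_smmix_le (k : Fin T → E) (p : E) : ‖∑ τ, sm k τ p • k τ‖ ≤ kap k := by
  calc ‖∑ τ, sm k τ p • k τ‖ ≤ ∑ τ, ‖sm k τ p • k τ‖ := norm_sum_le _ _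
    _ ≤ ∑ τ, ‖k τ‖ := by
        apply Finset.sum_le_sum
        intro τ _
        rw [norm_smul, Real.norm_eq_abs, abs_of_nonneg (sm_nonneg k τ p)]
        exact mul_le_of_le_one_left (norm_nonneg _) (sm_le_one k τ p)
    _ = kap k := rfl

lemma norm_smDσ_le (k : Fin T → E) (t : Fin T) (p : E) : ‖smDσ k t p‖ ≤ 2 * kap k := by
  apply ContinuousLinearMap.opNorm_le_bound _
    (by have := kap_nonneg k; linarith)
  intro e
  simp only [smDσ, ContinuousLinearMap.smul_apply, ContinuousLinearMap.sub_apply,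
    ContinuousLinearMap.sum_apply, innerSL_apply_apply, smul_eq_mul, Real.norm_eq_abs]
  have ha : |⟪k t, e⟫| ≤ kap k * ‖e‖ := by
    calc |⟪k t, e⟫| ≤ ‖k t‖ * ‖e‖ := abs_real_inner_le_norm _ _
      _ ≤ kap k * ‖e‖ := mul_le_mul_of_nonneg_right (norm_k_le_kap k t) (norm_nonneg _)
  have hb : |∑ τ, sm k τ p * ⟪k τ, e⟫| ≤ kap k * ‖e‖ := by
    calc |∑ τ, sm k τ p * ⟪k τ, e⟫| ≤ ∑ τ, |sm k τ p * ⟪k τ, e⟫| :=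
        Finset.abs_sum_le_sum_abs _ _
      _ ≤ ∑ τ, ‖k τ‖ * ‖e‖ := by
          apply Finset.sum_le_sum
          intro τ _
          rw [abs_mul, abs_of_nonneg (sm_nonneg k τ p)]
          calc sm k τ p * |⟪k τ, e⟫| ≤ 1 * |⟪k τ, e⟫| :=
              mul_le_mul_of_nonneg_right (sm_le_one k τ p) (abs_nonneg _)
            _ = |⟪k τ, e⟫| := one_mul _
            _ ≤ ‖k τ‖ * ‖e‖ := abs_real_inner_le_norm _ _
      _ = kap k * ‖e‖ := by rw [kap, Finset.sum_mul]
  calc |sm k t p * (⟪k t, e⟫ - ∑ τ, sm k τ p * ⟪k τ, e⟫)|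
      = sm k t p * |⟪k t, e⟫ - ∑ τ, sm k τ p * ⟪k τ, e⟫| := by
        rw [abs_mul, abs_of_nonneg (sm_nonneg k t p)]
    _ ≤ 1 * |⟪k t, e⟫ - ∑ τ, sm k τ p * ⟪k τ, e⟫| :=
        mul_le_mul_of_nonneg_right (sm_le_one k t p) (abs_nonneg _)
    _ = |⟪k t, e⟫ - ∑ τ, sm k τ p * ⟪k τ, e⟫| := one_mul _
    _ ≤ |⟪k t, e⟫| + |∑ τ, sm k τ p * ⟪k τ, e⟫| := abs_sub _ _
    _ ≤ kap k * ‖e‖ + kap k * ‖e‖ := add_le_add ha hb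
    _ = 2 * kap k * ‖e‖ := by ring

lemma sm_lip (k : Fin T → E) (t : Fin T) (p q : E) :
    |sm k t p - sm k t q| ≤ 2 * kap k * ‖p - q‖ := by
  have := Convex.norm_image_sub_le_of_norm_hasFDerivWithin_le
    (f := sm k t) (f' := fun x => smDσ k t x) (C := 2 * kap k) (s := Set.univ)
    (fun x _ => (hasFDerivAt_sm k t x).hasFDerivWithinAt)
    (fun x _ => norm_smDσ_le k t x) convex_univ (Set.mem_univ q) (Set.mem_univ p)
  simpa [Real.norm_eq_abs] using this

lemma smf_lip (γ : Fin T → ℝ) (k : Fin T → E) (p q : E) :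
    |smf γ k p - smf γ k q| ≤ 2 * kap k * gam γ * ‖p - q‖ := by
  rw [smf, smf, ← Finset.sum_sub_distrib]
  calc |∑ t, (γ t * sm k t p - γ t * sm k t q)| ≤ ∑ t, |γ t * sm k t p - γ t * sm k t q| :=
      Finset.abs_sum_le_sum_abs _ _
    _ ≤ ∑ t, |γ t| * (2 * kap k * ‖p - q‖) := by
        apply Finset.sum_le_sum
        intro t _
        rw [← mul_sub, abs_mul]
        exact mul_le_mul_of_nonneg_left (sm_lip k t p q) (abs_nonneg _)
    _ = 2 * kap k * gam γ * ‖p - q‖ := by rw [← Finset.sum_mul, gam]; ring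

lemma norm_smV_le (γ : Fin T → ℝ) (k : Fin T → E) (p : E) :
    ‖smV γ k p‖ ≤ 2 * kap k * gam γ := by
  rw [smV]
  calc ‖∑ t, (γ t * sm k t p) • (k t - ∑ τ, sm k τ p • k τ)‖
      ≤ ∑ t, ‖(γ t * sm k t p) • (k t - ∑ τ, sm k τ p • k τ)‖ := norm_sum_le _ _
    _ ≤ ∑ t, |γ t| * (2 * kap k) := by
        apply Finset.sum_le_sum
        intro t _
        rw [norm_smul, Real.norm_eq_abs, abs_mul, abs_of_nonneg (sm_nonneg k t p)]
        have h1 : ‖k t - ∑ τ, sm k τ p • k τ‖ ≤ 2 * kap k := by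
          calc ‖k t - ∑ τ, sm k τ p • k τ‖ ≤ ‖k t‖ + ‖∑ τ, sm k τ p • k τ‖ := norm_sub_le _ _
            _ ≤ kap k + kap k := add_le_add (norm_k_le_kap k t) (norm_smmix_le k p)
            _ = 2 * kap k := by ring
        calc |γ t| * sm k t p * ‖k t - ∑ τ, sm k τ p • k τ‖
            ≤ |γ t| * 1 * (2 * kap k) := by
              apply mul_le_mul
              · exact mul_le_mul_of_nonneg_left (sm_le_one k t p) (abs_nonneg _)
              · exact h1
              · exact norm_nonneg _
              · positivity
          _ = |γ t| * (2 * kap k) := by ring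
    _ = 2 * kap k * gam γ := by rw [← Finset.sum_mul, gam]; ring

lemma smmix_lip (k : Fin T → E) (p q : E) :
    ‖(∑ τ, sm k τ p • k τ) - ∑ τ, sm k τ q • k τ‖ ≤ 2 * kap k ^ 2 * ‖p - q‖ := by
  rw [← Finset.sum_sub_distrib]
  calc ‖∑ τ, (sm k τ p • k τ - sm k τ q • k τ)‖
      ≤ ∑ τ, ‖sm k τ p • k τ - sm k τ q • k τ‖ := norm_sum_le _ _
    _ ≤ ∑ τ, 2 * kap k * ‖p - q‖ * ‖k τ‖ := by
        apply Finset.sum_le_sum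
        intro τ _
        rw [← sub_smul, norm_smul, Real.norm_eq_abs]
        exact mul_le_mul_of_nonneg_right (sm_lip k τ p q) (norm_nonneg _)
    _ = 2 * kap k ^ 2 * ‖p - q‖ := by
        rw [← Finset.mul_sum]
        rw [show (∑ τ, ‖k τ‖) = kap k from rfl]
        ring

lemma smV_lip (γ : Fin T → ℝ) (k : Fin T → E) (p q : E) :
    ‖smV γ k p - smV γ k q‖ ≤ 6 * kap k ^ 2 * gam γ * ‖p - q‖ := by
  rw [smV, smV, ← Finset.sum_sub_distrib]
  have key : ∀ t : Fin T, (γ t * sm k t p) • (k t - ∑ τ, sm k τ p • k τ)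
      - (γ t * sm k t q) • (k t - ∑ τ, sm k τ q • k τ)
      = γ t • ((sm k t p - sm k t q) • (k t - ∑ τ, sm k τ p • k τ)
          - sm k t q • ((∑ τ, sm k τ p • k τ) - ∑ τ, sm k τ q • k τ)) := by
    intro t
    module
  calc ‖∑ t, ((γ t * sm k t p) • (k t - ∑ τ, sm k τ p • k τ)
        - (γ t * sm k t q) • (k t - ∑ τ, sm k τ q • k τ))‖
      ≤ ∑ t, ‖(γ t * sm k t p) • (k t - ∑ τ, sm k τ p • k τ)
        - (γ t * sm k t q) • (k t - ∑ τ, sm k τ q • k τ)‖ := norm_sum_le _ _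
    _ ≤ ∑ t, |γ t| * (6 * kap k ^ 2 * ‖p - q‖) := by
        apply Finset.sum_le_sum
        intro t _
        rw [key t, norm_smul, Real.norm_eq_abs]
        apply mul_le_mul_of_nonneg_left _ (abs_nonneg _)
        have h1 : ‖(sm k t p - sm k t q) • (k t - ∑ τ, sm k τ p • k τ)‖
            ≤ 2 * kap k * ‖p - q‖ * (2 * kap k) := by
          rw [norm_smul, Real.norm_eq_abs]
          apply mul_le_mul (sm_lip k t p q) _ (norm_nonneg _)
            (by nlinarith [kap_nonneg k, norm_nonneg (p - q)])
          · calc ‖k t - ∑ τ, sm k τ p • k τ‖ ≤ ‖k t‖ + ‖∑ τ, sm k τ p • k τ‖ := norm_sub_le _ _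
              _ ≤ kap k + kap k := add_le_add (norm_k_le_kap k t) (norm_smmix_le k p)
              _ = 2 * kap k := by ring
        have h2 : ‖sm k t q • ((∑ τ, sm k τ p • k τ) - ∑ τ, sm k τ q • k τ)‖
            ≤ 2 * kap k ^ 2 * ‖p - q‖ := by
          rw [norm_smul, Real.norm_eq_abs, abs_of_nonneg (sm_nonneg k t q)]
          calc sm k t q * ‖(∑ τ, sm k τ p • k τ) - ∑ τ, sm k τ q • k τ‖
              ≤ 1 * ‖(∑ τ, sm k τ p • k τ) - ∑ τ, sm k τ q • k τ‖ :=
                mul_le_mul_of_nonneg_right (sm_le_one k t q) (norm_nonneg _)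
            _ = ‖(∑ τ, sm k τ p • k τ) - ∑ τ, sm k τ q • k τ‖ := one_mul _
            _ ≤ 2 * kap k ^ 2 * ‖p - q‖ := smmix_lip k p q
        calc ‖(sm k t p - sm k t q) • (k t - ∑ τ, sm k τ p • k τ)
              - sm k t q • ((∑ τ, sm k τ p • k τ) - ∑ τ, sm k τ q • k τ)‖
            ≤ ‖(sm k t p - sm k t q) • (k t - ∑ τ, sm k τ p • k τ)‖
              + ‖sm k t q • ((∑ τ, sm k τ p • k τ) - ∑ τ, sm k τ q • k τ)‖ := norm_sub_le _ _
          _ ≤ 2 * kap k * ‖p - q‖ * (2 * kap k) + 2 * kap k ^ 2 * ‖p - q‖ := add_le_add h1 h2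
          _ = 6 * kap k ^ 2 * ‖p - q‖ := by ring
    _ = 6 * kap k ^ 2 * gam γ * ‖p - q‖ := by rw [← Finset.sum_mul, gam]; ring

/-- **Smoothness and descent.** If `ℓ` is differentiable, nonnegative, `|ℓ'| ≤ M₁`, and `ℓ'`
is `M₀`-Lipschitz, then there is `L > 0` such that `∇ℒ` is `L`-Lipschitz; moreover, for any
initialization and gradient-descent iterates `p(t+1) = p(t) − η∇ℒ(p(t))` with `0 < η < 2/L`,
one has `ℒ(p(t+1)) − ℒ(p(t)) ≤ −η(1 − Lη/2)‖∇ℒ(p(t))‖²` for all `t`, the series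
`Σ_t ‖∇ℒ(p(t))‖²` converges, and `‖∇ℒ(p(t))‖ → 0`. -/
theorem smoothness_and_descent (n d T : ℕ) (hn : 0 < n)
    (X : Fin n → Matrix (Fin T) (Fin d) ℝ) (Y : Fin n → ℝ)
    (hY : ∀ i, Y i = 1 ∨ Y i = -1)
    (v : Fin d → ℝ) (W : Matrix (Fin d) (Fin d) ℝ)
    (ℓ : ℝ → ℝ) (hdiff : Differentiable ℝ ℓ) (hnonneg : ∀ x, 0 ≤ ℓ x)
    (M₀ M₁ : ℝ)
    (hM₁ : ∀ x, |deriv ℓ x| ≤ M₁)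
    (hM₀ : ∀ x y, |deriv ℓ x - deriv ℓ y| ≤ M₀ * |x - y|) :
    ∃ L > (0 : ℝ),
      (∀ p q : EuclideanSpace ℝ (Fin d),
        ‖gradient (tLoss ℓ X Y v W) p - gradient (tLoss ℓ X Y v W) q‖ ≤ L * ‖p - q‖)
      ∧ ∀ (p : ℕ → EuclideanSpace ℝ (Fin d)) (η : ℝ), 0 < η → η < 2 / L →
          (∀ t, p (t + 1) = p t - η • gradient (tLoss ℓ X Y v W) (p t)) →
          (∀ t, tLoss ℓ X Y v W (p (t + 1)) - tLoss ℓ X Y v W (p t)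
              ≤ -(η * (1 - L * η / 2)) * ‖gradient (tLoss ℓ X Y v W) (p t)‖ ^ 2)
          ∧ Summable (fun t => ‖gradient (tLoss ℓ X Y v W) (p t)‖ ^ 2)
          ∧ Filter.Tendsto (fun t => ‖gradient (tLoss ℓ X Y v W) (p t)‖)
              Filter.atTop (nhds 0) := by

  classical
  set kk : Fin n → Fin T → EuclideanSpace ℝ (Fin d) := fun i t => toEuc (key X W i t) with hkk
  set γf : Fin n → Fin T → ℝ := fun i => score X Y v i with hγf
  have hM₁0 : 0 ≤ M₁ := le_trans (abs_nonneg _) (hM₁ 0)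
  have hM₀0 : 0 ≤ M₀ := by
    have h := hM₀ 0 1
    simp only [zero_sub, abs_neg, abs_one, mul_one] at h
    exact le_trans (abs_nonneg _) h
  have hsm : ∀ (i : Fin n) (p : EuclideanSpace ℝ (Fin d)) (t : Fin T),
      sprob X W i p t = sm (kk i) t p := by
    intro i p t
    simp only [sprob, softmax, sm, smD, hkk, toEuc, PiLp.inner_apply, RCLike.inner_apply,
      conj_trivial, WithLp.ofLp_toLp]
    simp only [mul_comm]
  have hLoss : tLoss ℓ X Y v W = fun p => (n : ℝ)⁻¹ * ∑ i, ℓ (smf (γf i) (kk i) p) := by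
    funext p
    rw [tLoss]
    congr 1
    simp only [smf, hsm, hγf]
  set GG : EuclideanSpace ℝ (Fin d) → EuclideanSpace ℝ (Fin d) := fun p =>
    (n : ℝ)⁻¹ • ∑ i, deriv ℓ (smf (γf i) (kk i) p) • smV (γf i) (kk i) p with hGG
  have hgrad : ∀ p, HasGradientAt (tLoss ℓ X Y v W) (GG p) p := by
    intro p
    rw [hLoss, hasGradientAt_iff_hasFDerivAt]
    have h1 : ∀ i : Fin n, HasFDerivAt (fun q => ℓ (smf (γf i) (kk i) q))
        (deriv ℓ (smf (γf i) (kk i) p) • (∑ t, γf i t • smDσ (kk i) t p)) p := fun i =>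
      ((hdiff (smf (γf i) (kk i) p)).hasDerivAt).comp_hasFDerivAt p (hasFDerivAt_smf _ _ p)
    have h2 := (HasFDerivAt.fun_sum (fun i (_ : i ∈ Finset.univ) => h1 i)).const_mul ((n : ℝ)⁻¹)
    have h3 : (InnerProductSpace.toDual ℝ (EuclideanSpace ℝ (Fin d))) (GG p)
        = (n : ℝ)⁻¹ • ∑ i, deriv ℓ (smf (γf i) (kk i) p)
            • (∑ t, γf i t • smDσ (kk i) t p) := by
      simp only [hGG, map_smul, map_sum, toDual_smV]
    rw [h3]
    exact h2
  have hgrad_eq : gradient (tLoss ℓ X Y v W) = GG := gradient_eq hgrad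
  set C : ℝ := (n : ℝ)⁻¹ * ∑ i, (M₀ * (2 * kap (kk i) * gam (γf i)) ^ 2
      + M₁ * (6 * kap (kk i) ^ 2 * gam (γf i))) with hC
  have hC0 : 0 ≤ C := by
    apply mul_nonneg (by positivity)
    apply Finset.sum_nonneg
    intro i _
    have h1 := kap_nonneg (kk i)
    have h2 := gam_nonneg (γf i)
    positivity
  have hlipC : ∀ p q, ‖GG p - GG q‖ ≤ C * ‖p - q‖ := by
    intro p q
    have hsplit : GG p - GG q = (n : ℝ)⁻¹ • ∑ i,
        (deriv ℓ (smf (γf i) (kk i) p) • smV (γf i) (kk i) p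
          - deriv ℓ (smf (γf i) (kk i) q) • smV (γf i) (kk i) q) := by
      rw [hGG, Finset.sum_sub_distrib, smul_sub]
    rw [hsplit, norm_smul, Real.norm_eq_abs, abs_of_nonneg (by positivity : (0:ℝ) ≤ (n:ℝ)⁻¹)]
    rw [hC, mul_assoc, Finset.sum_mul]
    apply mul_le_mul_of_nonneg_left _ (by positivity : (0:ℝ) ≤ (n:ℝ)⁻¹)
    calc ‖∑ i, (deriv ℓ (smf (γf i) (kk i) p) • smV (γf i) (kk i) p
            - deriv ℓ (smf (γf i) (kk i) q) • smV (γf i) (kk i) q)‖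
        ≤ ∑ i, ‖deriv ℓ (smf (γf i) (kk i) p) • smV (γf i) (kk i) p
            - deriv ℓ (smf (γf i) (kk i) q) • smV (γf i) (kk i) q‖ := norm_sum_le _ _
      _ ≤ ∑ i, (M₀ * (2 * kap (kk i) * gam (γf i)) ^ 2
            + M₁ * (6 * kap (kk i) ^ 2 * gam (γf i))) * ‖p - q‖ := by
          apply Finset.sum_le_sum
          intro i _
          set a := deriv ℓ (smf (γf i) (kk i) p) with ha
          set b := deriv ℓ (smf (γf i) (kk i) q) with hb
          set x := smV (γf i) (kk i) p with hx
          set y := smV (γf i) (kk i) q with hy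
          have hdecomp : a • x - b • y = (a - b) • x + b • (x - y) := by module
          rw [hdecomp]
          have hK := kap_nonneg (kk i)
          have hG := gam_nonneg (γf i)
          have habs : |a - b| ≤ M₀ * (2 * kap (kk i) * gam (γf i) * ‖p - q‖) := by
            calc |a - b| ≤ M₀ * |smf (γf i) (kk i) p - smf (γf i) (kk i) q| := hM₀ _ _
              _ ≤ M₀ * (2 * kap (kk i) * gam (γf i) * ‖p - q‖) :=
                  mul_le_mul_of_nonneg_left (smf_lip _ _ p q) hM₀0
          have h1 : ‖(a - b) • x‖ ≤ (M₀ * (2 * kap (kk i) * gam (γf i) * ‖p - q‖))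
              * (2 * kap (kk i) * gam (γf i)) := by
            rw [norm_smul, Real.norm_eq_abs]
            exact mul_le_mul habs (norm_smV_le _ _ p) (norm_nonneg _)
              (by positivity)
          have h2 : ‖b • (x - y)‖ ≤ M₁ * (6 * kap (kk i) ^ 2 * gam (γf i) * ‖p - q‖) := by
            rw [norm_smul, Real.norm_eq_abs]
            exact mul_le_mul (hM₁ _) (smV_lip _ _ p q) (norm_nonneg _) hM₁0
          calc ‖(a - b) • x + b • (x - y)‖ ≤ ‖(a - b) • x‖ + ‖b • (x - y)‖ := norm_add_le _ _
            _ ≤ (M₀ * (2 * kap (kk i) * gam (γf i) * ‖p - q‖)) * (2 * kap (kk i) * gam (γf i))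
                + M₁ * (6 * kap (kk i) ^ 2 * gam (γf i) * ‖p - q‖) := add_le_add h1 h2
            _ = (M₀ * (2 * kap (kk i) * gam (γf i)) ^ 2
                + M₁ * (6 * kap (kk i) ^ 2 * gam (γf i))) * ‖p - q‖ := by ring
  set L : ℝ := C + 1 with hLdef
  have hLpos : 0 < L := by linarith
  have hlipL : ∀ p q : EuclideanSpace ℝ (Fin d), ‖GG p - GG q‖ ≤ L * ‖p - q‖ := by
    intro p q
    calc ‖GG p - GG q‖ ≤ C * ‖p - q‖ := hlipC p q
      _ ≤ L * ‖p - q‖ := mul_le_mul_of_nonneg_right (by linarith) (norm_nonneg _)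
  have hf0 : ∀ x, 0 ≤ tLoss ℓ X Y v W x := by
    intro x
    rw [hLoss]
    exact mul_nonneg (by positivity) (Finset.sum_nonneg fun i _ => hnonneg _)
  refine ⟨L, hLpos, ?_, ?_⟩
  · intro p q
    simp only [hgrad_eq]
    exact hlipL p q
  · intro pseq η hη hη2 hpup
    have hquad := fun p q => quad_upper (tLoss ℓ X Y v W) GG L hLpos.le hgrad hlipL p q
    have hres := gd_consequences (tLoss ℓ X Y v W) GG L hLpos hf0 hquad pseq η hη hη2
      (by simpa only [hgrad_eq] using hpup)
    simpa only [hgrad_eq] using hres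
end

section
/- Suppose ℓ is differentiable, nonnegative, strictly decreasing, |ℓ'| ≤ M₁, ℓ' is M₀-Lipschitz, the SVM constraints defining p^{mm⋆} are feasible, and for every sample i the scores of all non-optimal tokens are equal (γ_{it₁} = γ_{it₂} for all t₁, t₂ ≠ optᵢ) while γ_{i,optᵢ} > γ_{it} for all t ≠ optᵢ. Let L be a Lipschitz constant of ∇ℒ. Then for any initialization p(0) and gradient descent iterates p(t+1) = p(t) − η∇ℒ(p(t)) with 0 < η < 2/L, the iterates diverge in norm: ‖p(t)‖ → ∞ as t → ∞. -/
open scoped RealInnerProductSpace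

lemma lin_diff {d : ℕ} (c : Fin d → ℝ) :
    Differentiable ℝ (fun p : EuclideanSpace ℝ (Fin d) => ∑ j, c j * p j) := by
  apply Differentiable.fun_sum
  intro j _
  exact Differentiable.const_mul ((EuclideanSpace.proj (𝕜 := ℝ) j).differentiable : Differentiable ℝ fun p : EuclideanSpace ℝ (Fin d) => p j) (c j)

lemma dir_hasDeriv {T : ℕ} (hT : 0 < T) (A B γ : Fin T → ℝ) :
    HasDerivAt (fun s : ℝ => ∑ t, γ t * softmax (fun τ => A τ + s * B τ) t)
      (∑ t, γ t * (softmax A t * (B t - ∑ τ, softmax A τ * B τ))) 0 := by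
  have hne : Nonempty (Fin T) := Fin.pos_iff_nonempty.mp hT
  set Z0 : ℝ := ∑ τ, Real.exp (A τ) with hZ0
  have hZ0pos : 0 < Z0 := Finset.sum_pos (fun τ _ => Real.exp_pos _) Finset.univ_nonempty
  have hN : ∀ t : Fin T, HasDerivAt (fun s : ℝ => Real.exp (A t + s * B t))
      (Real.exp (A t) * B t) 0 := by
    intro t
    have h1 : HasDerivAt (fun s : ℝ => A t + s * B t) (B t) 0 :=
      (hasDerivAt_mul_const (B t)).const_add (A t)
    simpa using h1.exp
  have hZ : HasDerivAt (fun s : ℝ => ∑ τ, Real.exp (A τ + s * B τ))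
      (∑ τ, Real.exp (A τ) * B τ) 0 := HasDerivAt.fun_sum (fun τ _ => hN τ)
  have hZ0' : (∑ τ, Real.exp (A τ + 0 * B τ)) = Z0 := by simp [hZ0]
  have hterm : ∀ t : Fin T, HasDerivAt
      (fun s : ℝ => γ t * softmax (fun τ => A τ + s * B τ) t)
      (γ t * (softmax A t * (B t - ∑ τ, softmax A τ * B τ))) 0 := by
    intro t
    have hdiv := (hN t).fun_div hZ (by rw [hZ0']; exact hZ0pos.ne')
    have h2 := hdiv.const_mul (γ t)
    have hfun : (fun s : ℝ => γ t * (Real.exp (A t + s * B t) / ∑ τ, Real.exp (A τ + s * B τ)))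
        = fun s : ℝ => γ t * softmax (fun τ => A τ + s * B τ) t := by
      funext s; simp [softmax]
    rw [hfun] at h2
    have hval : γ t * ((Real.exp (A t) * B t * (∑ τ, Real.exp (A τ + 0 * B τ))
          - Real.exp (A t + 0 * B t) * ∑ τ, Real.exp (A τ) * B τ)
          / (∑ τ, Real.exp (A τ + 0 * B τ)) ^ 2)
        = γ t * (softmax A t * (B t - ∑ τ, softmax A τ * B τ)) := by
      rw [hZ0']
      simp only [softmax, zero_mul, add_zero, ← hZ0]
      have hsum : ∑ x, Real.exp (A x) / Z0 * B x = (∑ x, Real.exp (A x) * B x) / Z0 := by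
        rw [Finset.sum_div]
        exact Finset.sum_congr rfl fun x _ => by rw [div_mul_eq_mul_div]
      rw [hsum]
      field_simp
    rw [← hval]
    exact h2
  exact HasDerivAt.fun_sum (fun t _ => hterm t)

lemma sprob_diff {n d T : ℕ} (X : Fin n → Matrix (Fin T) (Fin d) ℝ)
    (W : Matrix (Fin d) (Fin d) ℝ) (i : Fin n) (t : Fin T) :
    Differentiable ℝ (fun p : EuclideanSpace ℝ (Fin d) => sprob X W i p t) := by
  unfold sprob softmax
  have h1 : Differentiable ℝ (fun p : EuclideanSpace ℝ (Fin d) =>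
      Real.exp (∑ j, key X W i t j * p j)) :=
    Real.differentiable_exp.comp (lin_diff _)
  have h2 : Differentiable ℝ (fun p : EuclideanSpace ℝ (Fin d) =>
      ∑ τ, Real.exp (∑ j, key X W i τ j * p j)) :=
    Differentiable.fun_sum (fun τ _ => Real.differentiable_exp.comp (lin_diff _))
  have h0 : ∀ p : EuclideanSpace ℝ (Fin d),
      (∑ τ, Real.exp (∑ j, key X W i τ j * p j)) ≠ 0 := fun p =>
    (Finset.sum_pos (fun τ _ => Real.exp_pos _) (Finset.univ_nonempty_iff.mpr ⟨t⟩)).ne'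
  simp only [div_eq_mul_inv]
  exact h1.mul (h2.inv h0)

lemma tLoss_diff {n d T : ℕ} (ℓ : ℝ → ℝ) (hdiff : Differentiable ℝ ℓ)
    (X : Fin n → Matrix (Fin T) (Fin d) ℝ) (Y : Fin n → ℝ) (v : Fin d → ℝ)
    (W : Matrix (Fin d) (Fin d) ℝ) :
    Differentiable ℝ (tLoss ℓ X Y v W) := by
  unfold tLoss
  apply Differentiable.const_mul
  apply Differentiable.fun_sum
  intro i _
  exact hdiff.comp (Differentiable.fun_sum fun t _ =>
    (sprob_diff X W i t).const_mul _)

lemma sprob_path {n d T : ℕ} (X : Fin n → Matrix (Fin T) (Fin d) ℝ)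
    (W : Matrix (Fin d) (Fin d) ℝ) (i : Fin n) (p q : EuclideanSpace ℝ (Fin d)) (s : ℝ)
    (t : Fin T) :
    sprob X W i (p + s • q) t
      = softmax (fun τ => (∑ j, key X W i τ j * p j) + s * ∑ j, key X W i τ j * q j) t := by
  unfold sprob
  congr 1
  funext τ
  have happ : ∀ j, (p + s • q) j = p j + s * q j := fun j => rfl
  simp only [happ, mul_add, Finset.sum_add_distrib, Finset.mul_sum, mul_left_comm]

lemma tLoss_dir {n d T : ℕ} (hT : 0 < T) (ℓ : ℝ → ℝ) (hdiff : Differentiable ℝ ℓ)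
    (X : Fin n → Matrix (Fin T) (Fin d) ℝ) (Y : Fin n → ℝ) (v : Fin d → ℝ)
    (W : Matrix (Fin d) (Fin d) ℝ) (p q : EuclideanSpace ℝ (Fin d)) :
    HasDerivAt (fun s : ℝ => tLoss ℓ X Y v W (p + s • q))
      ((n : ℝ)⁻¹ * ∑ i, deriv ℓ (∑ t, score X Y v i t * sprob X W i p t) *
        (∑ t, score X Y v i t * (sprob X W i p t *
          ((∑ j, key X W i t j * q j) - ∑ τ, sprob X W i p τ * ∑ j, key X W i τ j * q j))))
      0 := by
  have hper : ∀ i : Fin n, HasDerivAt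
      (fun s : ℝ => ℓ (∑ t, score X Y v i t * sprob X W i (p + s • q) t))
      (deriv ℓ (∑ t, score X Y v i t * sprob X W i p t) *
        (∑ t, score X Y v i t * (sprob X W i p t *
          ((∑ j, key X W i t j * q j) - ∑ τ, sprob X W i p τ * ∑ j, key X W i τ j * q j))))
      0 := by
    intro i
    set A : Fin T → ℝ := fun t => ∑ j, key X W i t j * p j with hA
    set B : Fin T → ℝ := fun t => ∑ j, key X W i t j * q j with hB
    have hsp : ∀ t, sprob X W i p t = softmax A t := fun t => rfl
    have hin := dir_hasDeriv hT A B (score X Y v i)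
    have hfun : (fun s : ℝ => ∑ t, score X Y v i t * softmax (fun τ => A τ + s * B τ) t)
        = fun s : ℝ => ∑ t, score X Y v i t * sprob X W i (p + s • q) t := by
      funext s
      exact Finset.sum_congr rfl fun t _ => by rw [sprob_path X W i p q s t]
    rw [hfun] at hin
    have hval0 : (∑ t, score X Y v i t * softmax A t)
        = ∑ t, score X Y v i t * sprob X W i p t := by
      exact Finset.sum_congr rfl fun t _ => by rw [hsp]
    have hℓ : HasDerivAt ℓ (deriv ℓ (∑ t, score X Y v i t * sprob X W i p t))
        ((fun s : ℝ => ∑ t, score X Y v i t * sprob X W i (p + s • q) t) 0) := by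
      have h0 : (fun s : ℝ => ∑ t, score X Y v i t * sprob X W i (p + s • q) t) 0
          = ∑ t, score X Y v i t * sprob X W i p t := by
        simp
      rw [h0]
      exact (hdiff _).hasDerivAt
    exact hℓ.comp 0 hin
  have hsum := HasDerivAt.fun_sum (u := Finset.univ) (fun i (_ : i ∈ Finset.univ) => hper i)
  exact hsum.const_mul ((n : ℝ)⁻¹)

lemma S_pos {T : ℕ} (hT : 2 ≤ T) (σ γ B : Fin T → ℝ) (o : Fin T)
    (hσpos : ∀ t, 0 < σ t) (hσsum : ∑ t, σ t = 1)
    (hsame : ∀ t₁ t₂, t₁ ≠ o → t₂ ≠ o → γ t₁ = γ t₂)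
    (hopt : ∀ t, t ≠ o → γ t < γ o)
    (hgap : ∀ t, t ≠ o → 1 ≤ B o - B t) :
    0 < ∑ t, γ t * (σ t * (B t - ∑ τ, σ τ * B τ)) := by
  set C : ℝ := ∑ τ, σ τ * B τ with hC
  -- a witness ≠ o
  obtain ⟨t₀, ht₀⟩ : ∃ t₀ : Fin T, t₀ ≠ o := by
    rcases Finset.exists_mem_ne (s := (Finset.univ : Finset (Fin T)))
      (by simp; omega) o with ⟨t₀, _, h⟩
    exact ⟨t₀, h⟩
  set c : ℝ := γ t₀ with hc
  have key1 : ∑ t, σ t * (B t - C) = 0 := by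
    simp only [mul_sub, Finset.sum_sub_distrib, ← Finset.sum_mul, hσsum, one_mul, sub_self, hC]
  have key2 : ∑ t, γ t * (σ t * (B t - C)) = (γ o - c) * (σ o * (B o - C)) := by
    have hsplit : ∑ t, γ t * (σ t * (B t - C))
        = (∑ t, (γ t - c) * (σ t * (B t - C))) + c * ∑ t, σ t * (B t - C) := by
      rw [Finset.mul_sum, ← Finset.sum_add_distrib]
      exact Finset.sum_congr rfl fun t _ => by ring
    rw [hsplit, key1, mul_zero, add_zero]
    exact Finset.sum_eq_single o
      (fun t _ ht => by rw [hsame t t₀ ht ht₀, sub_self, zero_mul])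
      (fun h => absurd (Finset.mem_univ o) h)
  have hBC : 0 < B o - C := by
    have heq : B o - C = ∑ τ, σ τ * (B o - B τ) := by
      simp only [mul_sub, Finset.sum_sub_distrib, ← Finset.sum_mul, hσsum, one_mul, hC]
    rw [heq]
    apply Finset.sum_pos'
    · intro τ _
      rcases eq_or_ne τ o with rfl | h
      · simp
      · exact (mul_pos (hσpos τ) (lt_of_lt_of_le zero_lt_one (hgap τ h))).le
    · exact ⟨t₀, Finset.mem_univ t₀, mul_pos (hσpos t₀)
        (lt_of_lt_of_le zero_lt_one (hgap t₀ ht₀))⟩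
  rw [key2]
  exact mul_pos (sub_pos.mpr (hopt t₀ ht₀)) (mul_pos (hσpos o) hBC)

lemma grad_inner_neg {n d T : ℕ} (hn : 0 < n) (hT : 2 ≤ T)
    (X : Fin n → Matrix (Fin T) (Fin d) ℝ) (Y : Fin n → ℝ) (v : Fin d → ℝ)
    (W : Matrix (Fin d) (Fin d) ℝ) (ℓ : ℝ → ℝ) (hdiff : Differentiable ℝ ℓ)
    (hderiv : ∀ x, deriv ℓ x < 0)
    (opt : Fin n → Fin T) (pmm : EuclideanSpace ℝ (Fin d))
    (hfeas : ∀ i, ∀ t, t ≠ opt i →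
      1 ≤ ∑ j, (key X W i (opt i) j - key X W i t j) * pmm j)
    (hsame : ∀ i, ∀ t₁ t₂, t₁ ≠ opt i → t₂ ≠ opt i →
      score X Y v i t₁ = score X Y v i t₂)
    (hopt : ∀ i, ∀ t, t ≠ opt i → score X Y v i t < score X Y v i (opt i))
    (p : EuclideanSpace ℝ (Fin d)) :
    ⟪gradient (tLoss ℓ X Y v W) p, pmm⟫ < 0 := by
  have hTpos : 0 < T := by omega
  have hdiffL := tLoss_diff ℓ hdiff X Y v W
  have hpath : HasDerivAt (fun s : ℝ => p + s • pmm) pmm 0 := by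
    simpa using ((hasDerivAt_id (0 : ℝ)).smul_const pmm).const_add p
  have hcomp : HasDerivAt (fun s : ℝ => tLoss ℓ X Y v W (p + s • pmm))
      (fderiv ℝ (tLoss ℓ X Y v W) p pmm) 0 := by
    have := (hdiffL (p + (0 : ℝ) • pmm)).hasFDerivAt.comp_hasDerivAt 0 hpath
    rw [zero_smul, add_zero] at this
    exact this
  have hD := tLoss_dir hTpos ℓ hdiff X Y v W p pmm
  have hEq := hcomp.unique hD
  have hgrad : ⟪gradient (tLoss ℓ X Y v W) p, pmm⟫ = fderiv ℝ (tLoss ℓ X Y v W) p pmm := by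
    unfold gradient
    simp
  rw [hgrad, hEq]
  apply mul_neg_of_pos_of_neg (inv_pos.mpr (Nat.cast_pos.mpr hn))
  apply Finset.sum_neg ?_ (Finset.univ_nonempty_iff.mpr (Fin.pos_iff_nonempty.mp hn))
  intro i _
  apply mul_neg_of_neg_of_pos (hderiv _)
  apply S_pos hT (fun t => sprob X W i p t) (score X Y v i)
    (fun t => ∑ j, key X W i t j * pmm j) (opt i)
    (fun t => softmax_pos hTpos _ t) (softmax_sum hTpos _)
    (hsame i) (hopt i)
  intro t ht
  have := hfeas i t ht
  calc (1 : ℝ) ≤ ∑ j, (key X W i (opt i) j - key X W i t j) * pmm j := this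
    _ = (∑ j, key X W i (opt i) j * pmm j) - ∑ j, key X W i t j * pmm j := by
        simp [sub_mul, Finset.sum_sub_distrib]

lemma descent_lemma {F : Type*} [NormedAddCommGroup F] [InnerProductSpace ℝ F]
    [CompleteSpace F] (f : F → ℝ) (hf : Differentiable ℝ f) (L : ℝ) (hL : 0 ≤ L)
    (hLip : ∀ x y, ‖gradient f x - gradient f y‖ ≤ L * ‖x - y‖) (x y : F) :
    f y ≤ f x + ⟪gradient f x, y - x⟫ + L / 2 * ‖y - x‖ ^ 2 := by
  set u := y - x with hu
  have hgradcont : Continuous (gradient f) := by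
    have : LipschitzWith (Real.toNNReal L) (gradient f) := by
      apply LipschitzWith.of_dist_le_mul
      intro a b
      rw [dist_eq_norm, dist_eq_norm]
      calc ‖gradient f a - gradient f b‖ ≤ L * ‖a - b‖ := hLip a b
        _ ≤ Real.toNNReal L * ‖a - b‖ := by
            gcongr
            exact Real.le_coe_toNNReal L
    exact this.continuous
  set path : ℝ → F := fun s => x + s • u with hpath
  have hpathcont : Continuous path := by continuity
  set g : ℝ → ℝ := fun s => ⟪gradient f (path s), u⟫ with hg
  have hgval : ∀ s, fderiv ℝ f (path s) u = g s := by
    intro s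
    show (fderiv ℝ f (path s)) u = ⟪gradient f (path s), u⟫
    unfold gradient
    simp
  have hφ : ∀ s : ℝ, HasDerivAt (fun r : ℝ => f (path r)) (g s) s := by
    intro s
    have hp : HasDerivAt path u s := by
      simpa [hpath] using ((hasDerivAt_id s).smul_const u).const_add x
    have := (hf (path s)).hasFDerivAt.comp_hasDerivAt s hp
    rwa [hgval s] at this
  have hgcont : Continuous g := by
    apply Continuous.inner (hgradcont.comp hpathcont) continuous_const
  have hint : ∫ s in (0:ℝ)..1, g s = f (path 1) - f (path 0) :=
    intervalIntegral.integral_eq_sub_of_hasDerivAt (fun s _ => hφ s)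
      (hgcont.intervalIntegrable 0 1)
  have hbound : ∀ s ∈ Set.Icc (0:ℝ) 1, g s ≤ g 0 + L * ‖u‖ ^ 2 * s := by
    intro s hs
    have h1 : g s - g 0 = ⟪gradient f (path s) - gradient f (path 0), u⟫ := by
      rw [inner_sub_left]
    have h2 : ⟪gradient f (path s) - gradient f (path 0), u⟫
        ≤ ‖gradient f (path s) - gradient f (path 0)‖ * ‖u‖ := real_inner_le_norm _ _
    have h3 : ‖gradient f (path s) - gradient f (path 0)‖ ≤ L * (s * ‖u‖) := by
      have := hLip (path s) (path 0)
      have hps : path s - path 0 = s • u := by simp [hpath]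
      rw [hps] at this
      calc ‖gradient f (path s) - gradient f (path 0)‖ ≤ L * ‖s • u‖ := this
        _ = L * (s * ‖u‖) := by rw [norm_smul]; simp [abs_of_nonneg hs.1]
    nlinarith [norm_nonneg u, hs.1, mul_le_mul_of_nonneg_right h3 (norm_nonneg u)]
  have hle : ∫ s in (0:ℝ)..1, g s ≤ ∫ s in (0:ℝ)..1, (g 0 + L * ‖u‖ ^ 2 * s) := by
    apply intervalIntegral.integral_mono_on zero_le_one
      (hgcont.intervalIntegrable 0 1)
      ((continuous_const.add (continuous_const.mul continuous_id)).intervalIntegrable 0 1)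
    exact hbound
  have hrhs : ∫ s in (0:ℝ)..1, (g 0 + L * ‖u‖ ^ 2 * s) = g 0 + L / 2 * ‖u‖ ^ 2 := by
    have hI : IntervalIntegrable (fun s : ℝ => L * ‖u‖ ^ 2 * s) MeasureTheory.volume 0 1 :=
      (continuous_const.mul continuous_id').intervalIntegrable 0 1
    rw [intervalIntegral.integral_add intervalIntegrable_const hI,
      intervalIntegral.integral_const_mul, integral_id, intervalIntegral.integral_const]
    simp
    ring
  have hpath1 : path 1 = y := by simp [hpath, hu]
  have hpath0 : path 0 = x := by simp [hpath]
  have : f y - f x ≤ g 0 + L / 2 * ‖u‖ ^ 2 := by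
    rw [← hpath1, ← hpath0, ← hint, ← hrhs]
    exact hle
  have hg0 : g 0 = ⟪gradient f x, u⟫ := by rw [hg]; simp [hpath0]
  linarith [this, hg0 ▸ this]

/-- **Divergence of GD iterates.** Under the global-descent conditions (differentiable,
nonnegative, strictly decreasing loss with bounded, Lipschitz derivative; feasible SVM
constraints with minimal-norm solution `p^{mm⋆}`; equal non-optimal scores with the optimal
score strictly largest), gradient descent with step size `0 < η < 2/L`, where `L` is a
Lipschitz constant of `∇ℒ`, diverges in norm: `‖p(t)‖ → ∞`. -/
theorem gd_iterates_diverge (n d T : ℕ) (hn : 0 < n) (hT : 2 ≤ T)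
    (X : Fin n → Matrix (Fin T) (Fin d) ℝ) (Y : Fin n → ℝ)
    (hY : ∀ i, Y i = 1 ∨ Y i = -1)
    (v : Fin d → ℝ) (W : Matrix (Fin d) (Fin d) ℝ)
    (ℓ : ℝ → ℝ) (hdiff : Differentiable ℝ ℓ) (hnonneg : ∀ x, 0 ≤ ℓ x)
    (hanti : StrictAnti ℓ) (hderiv : ∀ x, deriv ℓ x < 0)
    (M₀ M₁ : ℝ)
    (hM₁ : ∀ x, |deriv ℓ x| ≤ M₁)
    (hM₀ : ∀ x y, |deriv ℓ x - deriv ℓ y| ≤ M₀ * |x - y|)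
    (opt : Fin n → Fin T) (pmm : EuclideanSpace ℝ (Fin d))
    (hfeas : ∀ i, ∀ t, t ≠ opt i →
      1 ≤ ∑ j, (key X W i (opt i) j - key X W i t j) * pmm j)
    (hmin : ∀ q : EuclideanSpace ℝ (Fin d),
      (∀ i, ∀ t, t ≠ opt i → 1 ≤ ∑ j, (key X W i (opt i) j - key X W i t j) * q j) →
      ‖pmm‖ ≤ ‖q‖)
    (hsame : ∀ i, ∀ t₁ t₂, t₁ ≠ opt i → t₂ ≠ opt i →
      score X Y v i t₁ = score X Y v i t₂)
    (hopt : ∀ i, ∀ t, t ≠ opt i → score X Y v i t < score X Y v i (opt i))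
    (L : ℝ) (hL : 0 < L)
    (hLip : ∀ p q : EuclideanSpace ℝ (Fin d),
      ‖gradient (tLoss ℓ X Y v W) p - gradient (tLoss ℓ X Y v W) q‖ ≤ L * ‖p - q‖)
    (η : ℝ) (hη₀ : 0 < η) (hη₁ : η < 2 / L)
    (p : ℕ → EuclideanSpace ℝ (Fin d))
    (hgd : ∀ t, p (t + 1) = p t - η • gradient (tLoss ℓ X Y v W) (p t)) :
    Filter.Tendsto (fun t => ‖p t‖) Filter.atTop Filter.atTop := by
  classical
  set ℒ := tLoss ℓ X Y v W with hℒ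
  set G := gradient ℒ with hG
  have hdiffL : Differentiable ℝ ℒ := tLoss_diff ℓ hdiff X Y v W
  have hTpos : 0 < T := by omega
  -- nonnegativity of the loss
  have hLnonneg : ∀ q, 0 ≤ ℒ q := by
    intro q
    apply mul_nonneg (by positivity)
    exact Finset.sum_nonneg fun i _ => hnonneg _
  -- descent step constant
  have hηL : η * L < 2 := by
    have := (lt_div_iff₀ hL).mp hη₁
    linarith
  set c : ℝ := η - L * η ^ 2 / 2 with hc
  have hcpos : 0 < c := by
    rw [hc]
    nlinarith
  -- per-step descent
  have hstep : ∀ t, ℒ (p (t + 1)) ≤ ℒ (p t) - c * ‖G (p t)‖ ^ 2 := by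
    intro t
    have hdesc := descent_lemma ℒ hdiffL L hL.le hLip (p t) (p (t + 1))
    have hdir : p (t + 1) - p t = -(η • G (p t)) := by
      rw [hgd t]; abel
    have hinner : ⟪G (p t), p (t + 1) - p t⟫ = -(η * ‖G (p t)‖ ^ 2) := by
      rw [hdir, inner_neg_right, real_inner_smul_right, real_inner_self_eq_norm_sq]
    have hnorm : ‖p (t + 1) - p t‖ ^ 2 = η ^ 2 * ‖G (p t)‖ ^ 2 := by
      rw [hdir, norm_neg, norm_smul, mul_pow]
      congr 1
      rw [Real.norm_eq_abs, sq_abs]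
    rw [hinner, hnorm] at hdesc
    calc ℒ (p (t + 1)) ≤ ℒ (p t) + -(η * ‖G (p t)‖ ^ 2) + L / 2 * (η ^ 2 * ‖G (p t)‖ ^ 2) :=
          hdesc
      _ = ℒ (p t) - c * ‖G (p t)‖ ^ 2 := by rw [hc]; ring
  -- the loss values converge, so gradient norms tend to zero
  set a : ℕ → ℝ := fun t => ℒ (p t) with ha
  have hanti' : Antitone a := by
    apply antitone_nat_of_succ_le
    intro t
    have := hstep t
    nlinarith [sq_nonneg ‖G (p t)‖, hcpos]
  have hbdd : BddBelow (Set.range a) := ⟨0, fun x ⟨t, ht⟩ => ht ▸ hLnonneg (p t)⟩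
  have hconv : Filter.Tendsto a Filter.atTop (nhds (⨅ t, a t)) :=
    tendsto_atTop_ciInf hanti' hbdd
  have hconv' : Filter.Tendsto (fun t => a (t + 1)) Filter.atTop (nhds (⨅ t, a t)) :=
    hconv.comp (Filter.tendsto_add_atTop_nat 1)
  have hdiff0 : Filter.Tendsto (fun t => a t - a (t + 1)) Filter.atTop (nhds 0) := by
    have := hconv.sub hconv'
    simpa using this
  have hsq0 : Filter.Tendsto (fun t => c * ‖G (p t)‖ ^ 2) Filter.atTop (nhds 0) := by
    apply tendsto_of_tendsto_of_tendsto_of_le_of_le tendsto_const_nhds hdiff0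
    · intro t
      positivity
    · intro t
      have := hstep t
      simp only [ha]
      linarith
  have hsq0' : Filter.Tendsto (fun t => ‖G (p t)‖ ^ 2) Filter.atTop (nhds 0) := by
    have h2 := hsq0.const_mul c⁻¹
    simpa [← mul_assoc, inv_mul_cancel₀ hcpos.ne'] using h2
  have hgz : Filter.Tendsto (fun t => ‖G (p t)‖) Filter.atTop (nhds 0) := by
    have h3 := (Real.continuous_sqrt.tendsto 0).comp hsq0'
    have h4 : ((fun x => Real.sqrt x) ∘ fun t => ‖G (p t)‖ ^ 2) = fun t => ‖G (p t)‖ :=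
      funext fun t => Real.sqrt_sq (norm_nonneg _)
    rw [h4] at h3
    simpa using h3
  -- gradient does not vanish anywhere
  have hgradne : ∀ q : EuclideanSpace ℝ (Fin d), G q ≠ 0 := by
    intro q hq0
    have := grad_inner_neg hn hT X Y v W ℓ hdiff hderiv opt pmm hfeas hsame hopt q
    rw [← hG, hq0] at this
    simp at this
  -- gradient is continuous
  have hGcont : Continuous G := by
    have : LipschitzWith (Real.toNNReal L) G := by
      apply LipschitzWith.of_dist_le_mul
      intro x y
      rw [dist_eq_norm, dist_eq_norm]
      calc ‖G x - G y‖ ≤ L * ‖x - y‖ := hLip x y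
        _ ≤ Real.toNNReal L * ‖x - y‖ := by
            gcongr
            exact Real.le_coe_toNNReal L
    exact this.continuous
  -- now suppose the iterates do not diverge
  by_contra hcon
  rw [Filter.tendsto_atTop] at hcon
  push_neg at hcon
  obtain ⟨R, hR⟩ := hcon
  obtain ⟨t₀, ht₀⟩ := hR.exists
  set S := Metric.closedBall (0 : EuclideanSpace ℝ (Fin d)) R with hS
  have hcpt : IsCompact S := isCompact_closedBall _ _
  have hSne : (p t₀) ∈ S := by
    rw [hS, Metric.mem_closedBall, dist_zero_right]
    exact ht₀.le
  obtain ⟨z, hzS, hzmin⟩ := hcpt.exists_isMinOn ⟨p t₀, hSne⟩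
    ((continuous_norm.comp hGcont).continuousOn)
  set ε := ‖G z‖ with hε
  have hεpos : 0 < ε := norm_pos_iff.mpr (hgradne z)
  have hev : ∀ᶠ t in Filter.atTop, ‖G (p t)‖ < ε :=
    hgz.eventually (Filter.Tendsto.eventually_lt_const (by exact hεpos) Filter.tendsto_id)
  obtain ⟨t₁, ht₁lt, ht₁ev⟩ := (hR.and_eventually hev).exists
  have hpt₁ : p t₁ ∈ S := by
    rw [hS, Metric.mem_closedBall, dist_zero_right]
    exact ht₁lt.le
  have : ε ≤ ‖G (p t₁)‖ := hzmin hpt₁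
  linarith
end
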